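/- arXiv:2503.16990 — 6 statements merged into one kernel-verified Lean document; each statement's English description precedes it below -/
import Mathlib

section
/- Let k be a field, let U, P, D be matrices over k such that the product U·P·D is defined, and let α ∈ k be a nonzero element. Let M be the block matrix M = [[U·P, 0], [α·P, P·D]]. Then there exist square matrices L and R over k with determinant one such that L·M·R = [[0, −α⁻¹·U·P·D], [α·P, 0]]. Consequently rank(M) = rank(P) + rank(U·P·D), and M has full rank if and only if P and U·P·D both have full rank for the same reason. Moreover, if P and U·P·D are square of sizes n and m respectively, then det(M) = (−1)^{m(n+1)} · det(P) · det(U·P·D) · α^{n−m}. -/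
/-!
Left and right multiplication by the unipotent block matrices `[[1, -α⁻¹U], [0, 1]]` and
`[[1, -α⁻¹D], [0, 1]]` clears the diagonal blocks of `M`, leaving the anti-diagonal matrix
`[[0, -α⁻¹UPD], [αP, 0]]`. Rank and determinant are unchanged by these operations, and an
anti-diagonal block matrix is a column permutation of a block-diagonal one; in the square case
that permutation is the rotation of `Fin (a + b)` by `a`, of sign `(-1)^(ab)`.
-/

/-- A matrix has full rank if the linear map it represents is injective or surjective. -/
def Matrix.HasFullRank {k : Type*} [Field k] {α β : Type*} [Fintype α] [Fintype β]
    (M : Matrix α β k) : Prop :=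
  Function.Injective M.mulVecLin ∨ Function.Surjective M.mulVecLin

open Matrix

section BlockRank

variable {K : Type*} [Field K]

theorem Submodule.finrank_prod_eq {V W : Type*} [AddCommGroup V] [Module K V] [AddCommGroup W]
    [Module K W] [FiniteDimensional K V] [FiniteDimensional K W]
    (p : Submodule K V) (q : Submodule K W) :
    Module.finrank K (p.prod q) = Module.finrank K p + Module.finrank K q := by
  have hinj : Function.Injective (p.subtype.prodMap q.subtype) := by
    rw [← LinearMap.ker_eq_bot, LinearMap.ker_prodMap, Submodule.ker_subtype,
      Submodule.ker_subtype, Submodule.prod_bot]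
  rw [← Module.finrank_prod, ← LinearMap.finrank_range_of_inj hinj, LinearMap.range_prodMap,
    Submodule.range_subtype, Submodule.range_subtype]

theorem Matrix.mulVecLin_fromBlocks_zero₁₂_zero₂₁ {l m n o : Type*} [Fintype m] [Fintype o]
    (A : Matrix l m K) (D : Matrix n o K) :
    (fromBlocks A 0 0 D).mulVecLin =
      (LinearEquiv.sumArrowLequivProdArrow l n K K).symm.toLinearMap ∘ₗ
        A.mulVecLin.prodMap D.mulVecLin ∘ₗ
          (LinearEquiv.sumArrowLequivProdArrow m o K K).toLinearMap := by
  refine LinearMap.ext fun x => funext fun i => ?_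
  cases i <;> simp [fromBlocks_mulVec, LinearEquiv.sumArrowLequivProdArrow,
    Equiv.sumArrowEquivProdArrow, Function.comp_def]

theorem Matrix.rank_fromBlocks_zero₁₂_zero₂₁ {l m n o : Type*} [Fintype l] [Fintype m]
    [Fintype n] [Fintype o] (A : Matrix l m K) (D : Matrix n o K) :
    (fromBlocks A 0 0 D).rank = A.rank + D.rank := by
  rw [rank, mulVecLin_fromBlocks_zero₁₂_zero₂₁, LinearMap.range_comp, LinearMap.range_comp,
    LinearEquiv.range, Submodule.map_top, LinearEquiv.finrank_map_eq, LinearMap.range_prodMap,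
    Submodule.finrank_prod_eq, rank, rank]

theorem Matrix.rank_fromBlocks_zero₁₁_zero₂₂ {l m n o : Type*} [Fintype l] [Fintype m]
    [Fintype n] [Fintype o] (B : Matrix l o K) (C : Matrix n m K) :
    (fromBlocks 0 B C 0).rank = B.rank + C.rank := by
  have hswap : fromBlocks 0 B C 0 = (fromBlocks B 0 0 C).submatrix id Sum.swap := by
    ext (i | i) (j | j) <;> rfl
  rw [hswap, ← rank_fromBlocks_zero₁₂_zero₂₁]
  exact rank_submatrix _ (Equiv.refl _) (Equiv.sumComm m o)

theorem Matrix.injective_mulVecLin_iff_rank_eq_card {m n : Type*} [Fintype n]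
    (A : Matrix m n K) : Function.Injective A.mulVecLin ↔ A.rank = Fintype.card n := by
  have hrk := LinearMap.finrank_range_add_finrank_ker A.mulVecLin
  rw [Module.finrank_fintype_fun_eq_card] at hrk
  rw [← LinearMap.ker_eq_bot, ← Submodule.finrank_eq_zero, rank]
  omega

theorem Matrix.surjective_mulVecLin_iff_rank_eq_card {m n : Type*} [Fintype m] [Fintype n]
    (A : Matrix m n K) : Function.Surjective A.mulVecLin ↔ A.rank = Fintype.card m := by
  rw [← LinearMap.range_eq_top, rank, ← Module.finrank_fintype_fun_eq_card (R := K),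
    Submodule.eq_top_iff_finrank_eq]

theorem Matrix.hasFullRank_iff_of_rank_eq_add {m n m₁ n₁ m₂ n₂ : Type*} [Fintype m] [Fintype n]
    [Fintype m₁] [Fintype n₁] [Fintype m₂] [Fintype n₂]
    (M : Matrix m n K) (P : Matrix m₁ n₁ K) (Q : Matrix m₂ n₂ K)
    (hm : Fintype.card m = Fintype.card m₁ + Fintype.card m₂)
    (hn : Fintype.card n = Fintype.card n₁ + Fintype.card n₂)
    (hrank : M.rank = P.rank + Q.rank) :
    M.HasFullRank ↔
      (Function.Injective P.mulVecLin ∧ Function.Injective Q.mulVecLin) ∨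
        (Function.Surjective P.mulVecLin ∧ Function.Surjective Q.mulVecLin) := by
  have := P.rank_le_card_width
  have := P.rank_le_card_height
  have := Q.rank_le_card_width
  have := Q.rank_le_card_height
  simp only [HasFullRank, injective_mulVecLin_iff_rank_eq_card,
    surjective_mulVecLin_iff_rank_eq_card, hrank, hm, hn]
  omega

end BlockRank

section Determinant

theorem coe_finRotate_pow_apply {n : ℕ} (k : ℕ) (i : Fin n) :
    ((finRotate n ^ k) i : ℕ) = (i + k) % n := by
  induction k with
  | zero => simp [Nat.mod_eq_of_lt i.2]
  | succ k ih =>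
    have := i.neZero
    rw [pow_succ', Equiv.Perm.mul_apply, finRotate_apply, Fin.val_add, Fin.val_one', ih,
      Nat.add_mod_mod, Nat.mod_add_mod, add_assoc]

theorem finCongr_trans_finAddFlip (m n : ℕ) :
    (finCongr (Nat.add_comm m n)).trans finAddFlip = finRotate (m + n) ^ m := by
  ext ⟨i, hi⟩
  rw [coe_finRotate_pow_apply, Equiv.trans_apply, finCongr_apply_mk]
  rcases Nat.lt_or_ge i n with h | h
  · simp only [finAddFlip_apply_mk_left h, Fin.val_mk]
    rw [Nat.mod_eq_of_lt (by omega), Nat.add_comm]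
  · simp only [finAddFlip_apply_mk_right h, Fin.val_mk]
    rw [Nat.mod_eq_sub_mod (by omega), Nat.mod_eq_of_lt (by omega)]
    omega

theorem sign_finCongr_trans_finAddFlip (m n : ℕ) :
    Equiv.Perm.sign ((finCongr (Nat.add_comm m n)).trans finAddFlip) = (-1) ^ (m * n) := by
  rw [finCongr_trans_finAddFlip, map_pow, sign_finRotate, ← pow_mul]
  rcases Nat.eq_zero_or_pos m with rfl | hm
  · simp
  · have : (m + n - 1) * m = m * n + m * (m - 1) := by
      rw [show m + n - 1 = (m - 1) + n by omega]
      ring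
    rw [this, pow_add, (Nat.even_mul_pred_self m).neg_one_pow, mul_one]

theorem Matrix.det_submatrix_mul_mul {R ι m n : Type*} [CommRing R] [Fintype ι] [DecidableEq ι]
    [Fintype m] [DecidableEq m] [Fintype n] [DecidableEq n]
    (L : Matrix m m R) (M : Matrix m n R) (N : Matrix n n R) (e₁ : ι ≃ m) (e₂ : ι ≃ n) :
    ((L * M * N).submatrix e₁ e₂).det = L.det * (M.submatrix e₁ e₂).det * N.det := by
  rw [← submatrix_mul_equiv _ _ _ e₂, ← submatrix_mul_equiv _ _ _ e₁, det_mul, det_mul,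
    det_submatrix_equiv_self, det_submatrix_equiv_self]

theorem Matrix.det_submatrix_finSumFinEquiv_fromBlocks_zero₁₁_zero₂₂ {R : Type*} [CommRing R]
    {m n : ℕ} (B : Matrix (Fin m) (Fin m) R) (C : Matrix (Fin n) (Fin n) R) :
    ((fromBlocks 0 B C 0).submatrix finSumFinEquiv.symm
        (fun j => finSumFinEquiv.symm (finCongr (Nat.add_comm m n) j))).det =
      (-1) ^ (m * n) * B.det * C.det := by
  have hswap : (fromBlocks 0 B C 0).submatrix finSumFinEquiv.symm
        (fun j => finSumFinEquiv.symm (finCongr (Nat.add_comm m n) j)) =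
      ((fromBlocks B 0 0 C).submatrix finSumFinEquiv.symm finSumFinEquiv.symm).submatrix id
        ((finCongr (Nat.add_comm m n)).trans finAddFlip) := by
    ext i j
    simp only [submatrix_apply, id, finAddFlip, Equiv.trans_apply, Equiv.symm_apply_apply]
    rcases finSumFinEquiv.symm i with i | i <;>
      rcases finSumFinEquiv.symm (finCongr (Nat.add_comm m n) j) with j | j <;> rfl
  rw [hswap, det_permute', sign_finCongr_trans_finAddFlip, det_submatrix_equiv_self,
    det_fromBlocks_zero₂₁]
  push_cast
  ring

end Determinant

theorem Matrix.fromBlocks_one_mul_fromBlocks_mul_fromBlocks_one {K a b c e : Type*} [Field K]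
    [Fintype a] [DecidableEq a] [Fintype b] [DecidableEq b] [Fintype c] [DecidableEq c]
    [Fintype e] [DecidableEq e]
    (U : Matrix a b K) (P : Matrix b c K) (D : Matrix c e K) {α : K} (hα : α ≠ 0) :
    (fromBlocks 1 (-α⁻¹ • U) 0 1 : Matrix (a ⊕ b) (a ⊕ b) K) *
        fromBlocks (U * P) 0 (α • P) (P * D) *
        (fromBlocks 1 (-α⁻¹ • D) 0 1 : Matrix (c ⊕ e) (c ⊕ e) K) =
      fromBlocks 0 (-α⁻¹ • (U * P * D)) (α • P) 0 := by
  simp [fromBlocks_multiply, smul_mul, smul_smul, inv_mul_cancel₀ hα, mul_inv_cancel₀ hα,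
    Matrix.mul_assoc]

/-- Let `U, P, D` be matrices over a field `k` such that `U·P·D` is defined
and let `α ≠ 0`.  For the block matrix `M = [[U·P, 0], [α·P, P·D]]` there are square matrices
`L, R` of determinant one with `L·M·R = [[0, -α⁻¹·U·P·D], [α·P, 0]]`; consequently
`rank M = rank P + rank (U·P·D)`, and `M` has full rank iff `P` and `U·P·D` have full rank
for the same reason.  Moreover, if `P` and `U·P·D` are square of sizes `n = b` and `m = a`
respectively, then `det M = (-1)^(m(n+1)) · det P · det (U·P·D) · α^(n-m)`. -/
theorem statement_0 {k : Type*} [Field k] {a b c e : ℕ}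
    (U : Matrix (Fin a) (Fin b) k) (P : Matrix (Fin b) (Fin c) k) (D : Matrix (Fin c) (Fin e) k)
    (α : k) (hα : α ≠ 0)
    (M : Matrix (Fin a ⊕ Fin b) (Fin c ⊕ Fin e) k)
    (hM : M = Matrix.fromBlocks (U * P) 0 (α • P) (P * D)) :
    (∃ (L : Matrix (Fin a ⊕ Fin b) (Fin a ⊕ Fin b) k)
       (R : Matrix (Fin c ⊕ Fin e) (Fin c ⊕ Fin e) k),
      L.det = 1 ∧ R.det = 1 ∧
      L * M * R = Matrix.fromBlocks 0 (-(α⁻¹) • (U * P * D)) (α • P) 0) ∧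
    M.rank = P.rank + (U * P * D).rank ∧
    (M.HasFullRank ↔
      ((Function.Injective P.mulVecLin ∧ Function.Injective (U * P * D).mulVecLin) ∨
       (Function.Surjective P.mulVecLin ∧ Function.Surjective (U * P * D).mulVecLin))) ∧
    (∀ (hbc : b = c) (hae : a = e),
      (M.submatrix (finSumFinEquiv.symm : Fin (a + b) → Fin a ⊕ Fin b)
          (fun j : Fin (a + b) =>
            (finSumFinEquiv.symm (finCongr (by omega : a + b = c + e) j) : Fin c ⊕ Fin e))).det =
        (-1 : k) ^ (a * (b + 1)) * (P.submatrix id (finCongr hbc : Fin b → Fin c)).det *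
          ((U * P * D).submatrix id (finCongr hae : Fin a → Fin e)).det *
          α ^ ((b : ℤ) - (a : ℤ))) := by
  set L : Matrix (Fin a ⊕ Fin b) (Fin a ⊕ Fin b) k := fromBlocks 1 (-α⁻¹ • U) 0 1
  set R : Matrix (Fin c ⊕ Fin e) (Fin c ⊕ Fin e) k := fromBlocks 1 (-α⁻¹ • D) 0 1
  have hL : L.det = 1 := by simp [L]
  have hR : R.det = 1 := by simp [R]
  have hLMR : L * M * R = fromBlocks 0 (-α⁻¹ • (U * P * D)) (α • P) 0 :=
    hM ▸ fromBlocks_one_mul_fromBlocks_mul_fromBlocks_one U P D hα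
  have hrank : M.rank = P.rank + (U * P * D).rank := by
    rw [← rank_mul_eq_right_of_isUnit_det L M (by simp [hL]),
      ← rank_mul_eq_left_of_isUnit_det R _ (by simp [hR]), hLMR,
      rank_fromBlocks_zero₁₁_zero₂₂, rank_smul_of_mem_nonZeroDivisors _ (by simpa using hα),
      rank_smul_of_mem_nonZeroDivisors _ (by simpa using hα), add_comm]
  refine ⟨⟨L, R, hL, hR, hLMR⟩, hrank, ?_, fun hbc hae => ?_⟩
  · exact hasFullRank_iff_of_rank_eq_add M P _ (by simp [add_comm]) (by simp) hrank
  · subst hbc hae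
    have hdet := det_submatrix_mul_mul L M R finSumFinEquiv.symm
      ((finCongr (Nat.add_comm a b)).trans finSumFinEquiv.symm)
    rw [Equiv.coe_trans, Function.comp_def, hL, hR, one_mul, mul_one, hLMR,
      det_submatrix_finSumFinEquiv_fromBlocks_zero₁₁_zero₂₂] at hdet
    rw [← hdet, det_smul, det_smul, zpow_sub₀ hα, zpow_natCast, zpow_natCast]
    simp only [finCongr_refl, Equiv.coe_refl, submatrix_id_id, Fintype.card_fin]
    rw [neg_pow α⁻¹, inv_pow]
    field_simp
    ring
end

section
/- Let B be a standard graded artinian k-algebra, let A = B ⊗_k k[x]/(x²), let ℓ̄ ∈ B₁ be a linear form and ℓ = ℓ̄ + x ∈ A₁. Fix i ≥ 0 and t ≥ 1, and assume t is invertible in k. (1) If i = 0, then ·ℓ^t : A₀ → A_t has full rank if and only if ·ℓ̄^{t−1} : B₀ → B_{t−1} has full rank. (2) If i > 0 and B_{i+t} = 0, then ·ℓ^t : A_i → A_{i+t} has full rank if and only if ·ℓ̄^{t−1} : B_i → B_{i+t−1} is surjective. (3) If i = 0, B_t = 0 and dim_k B_{t−1} = 1, then the matrix M₀^t representing ·ℓ^t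 : A₀ → A_t is square and det(M₀^t) = t · det(M̄₀^{t−1}), where M̄₀^{t−1} is the matrix representing ·ℓ̄^{t−1} : B₀ → B_{t−1}. -/
open scoped BigOperators

/-- Multiplication by `a` is injective as a map on the subspace `V`. -/
def MulInjOn {k R : Type*} [Field k] [CommRing R] [Algebra k R]
    (V : Submodule k R) (a : R) : Prop :=
  ∀ v ∈ V, a * v = 0 → v = 0

/-- Multiplication by `a` maps the subspace `V` onto the subspace `W`. -/
def MulSurjOnto {k R : Type*} [Field k] [CommRing R] [Algebra k R]
    (V W : Submodule k R) (a : R) : Prop :=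
  ∀ w ∈ W, ∃ v ∈ V, a * v = w

/-- The multiplication map `·a : V → W` has full rank: it is injective or surjective. -/
def MulFullRank {k R : Type*} [Field k] [CommRing R] [Algebra k R]
    (V W : Submodule k R) (a : R) : Prop :=
  MulInjOn V a ∨ MulSurjOnto V W a

/-- `𝒜` is the grading of a standard graded artinian `k`-algebra structure on `R`:
the components form an internal direct sum, vanish in negative degrees, are
multiplicative, the degree-zero part is spanned by `1`, the algebra is generated in
degree one, and `R` is a finite-dimensional `k`-vector space (equivalently, artinian). -/
structure IsStdGradedArtinian (k : Type*) [Field k] (R : Type*) [CommRing R] [Algebra k R]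
    (𝒜 : ℤ → Submodule k R) : Prop where
  internal : DirectSum.IsInternal 𝒜
  one_mem : (1 : R) ∈ 𝒜 0
  mul_mem : ∀ {i j : ℤ} {a b : R}, a ∈ 𝒜 i → b ∈ 𝒜 j → a * b ∈ 𝒜 (i + j)
  neg_bot : ∀ i : ℤ, i < 0 → 𝒜 i = ⊥
  zero_spanOne : 𝒜 0 = Submodule.span k {(1 : R)}
  succ_eq : ∀ i : ℤ, 0 ≤ i → 𝒜 (i + 1) = 𝒜 1 * 𝒜 i
  finiteDim : FiniteDimensional k R

/-- `A` (graded by `ℬ`) is the extension `B ⊗ₖ k[x]/(x^d)` of `B` (graded by `𝒜`):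
`φ` is the canonical inclusion of `B`, `x` has degree one with `x^d = 0`, and each
graded component decomposes as `ℬ j = ⊕_{q=0}^{d-1} x^q · φ(𝒜 (j - q))`. -/
structure IsCIExtension {k B A : Type*} [Field k] [CommRing B] [Algebra k B]
    [CommRing A] [Algebra k A]
    (𝒜 : ℤ → Submodule k B) (ℬ : ℤ → Submodule k A)
    (φ : B →ₐ[k] A) (x : A) (d : ℕ) : Prop where
  map_mem : ∀ (j : ℤ) (b : B), b ∈ 𝒜 j → φ b ∈ ℬ j
  x_mem : x ∈ ℬ 1
  x_pow : x ^ d = 0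
  decomp_mem : ∀ (j : ℤ) (f : Fin d → B), (∀ q : Fin d, f q ∈ 𝒜 (j - ((q : ℕ) : ℤ))) →
    (∑ q : Fin d, x ^ (q : ℕ) * φ (f q)) ∈ ℬ j
  decomp_exists : ∀ (j : ℤ), ∀ c ∈ ℬ j, ∃ f : Fin d → B,
    (∀ q : Fin d, f q ∈ 𝒜 (j - ((q : ℕ) : ℤ))) ∧ c = ∑ q : Fin d, x ^ (q : ℕ) * φ (f q)
  decomp_unique : ∀ (j : ℤ) (f : Fin d → B), (∀ q : Fin d, f q ∈ 𝒜 (j - ((q : ℕ) : ℤ))) →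
    (∑ q : Fin d, x ^ (q : ℕ) * φ (f q)) = 0 → ∀ q : Fin d, f q = 0

/-- `A` (graded by `ℬ`) is the extension `B ⊗ₖ k[x₁,…,xₙ]/(x₁^{d₁},…,xₙ^{dₙ})` of `B`
(graded by `𝒜`). -/
structure IsMultiCIExtension {k B A : Type*} [Field k] [CommRing B] [Algebra k B]
    [CommRing A] [Algebra k A] {n : ℕ}
    (𝒜 : ℤ → Submodule k B) (ℬ : ℤ → Submodule k A)
    (φ : B →ₐ[k] A) (x : Fin n → A) (dv : Fin n → ℕ) : Prop where
  map_mem : ∀ (j : ℤ) (b : B), b ∈ 𝒜 j → φ b ∈ ℬ j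
  x_mem : ∀ m : Fin n, x m ∈ ℬ 1
  x_pow : ∀ m : Fin n, x m ^ dv m = 0
  decomp_mem : ∀ (j : ℤ) (f : ((m : Fin n) → Fin (dv m)) → B),
    (∀ e, f e ∈ 𝒜 (j - ∑ m : Fin n, ((e m : ℕ) : ℤ))) →
    (∑ e : (m : Fin n) → Fin (dv m), (∏ m : Fin n, x m ^ ((e m : ℕ))) * φ (f e)) ∈ ℬ j
  decomp_exists : ∀ (j : ℤ), ∀ c ∈ ℬ j, ∃ f : ((m : Fin n) → Fin (dv m)) → B,
    (∀ e, f e ∈ 𝒜 (j - ∑ m : Fin n, ((e m : ℕ) : ℤ))) ∧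
    c = ∑ e : (m : Fin n) → Fin (dv m), (∏ m : Fin n, x m ^ ((e m : ℕ))) * φ (f e)
  decomp_unique : ∀ (j : ℤ) (f : ((m : Fin n) → Fin (dv m)) → B),
    (∀ e, f e ∈ 𝒜 (j - ∑ m : Fin n, ((e m : ℕ) : ℤ))) →
    (∑ e : (m : Fin n) → Fin (dv m), (∏ m : Fin n, x m ^ ((e m : ℕ))) * φ (f e)) = 0 →
    ∀ e, f e = 0

/-- The weak Lefschetz property. -/
def HasWLP {k R : Type*} [Field k] [CommRing R] [Algebra k R]
    (𝒜 : ℤ → Submodule k R) : Prop :=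
  ∃ ℓ ∈ 𝒜 1, ∀ i : ℤ, 0 ≤ i → MulFullRank (𝒜 i) (𝒜 (i + 1)) ℓ

/-- The strong Lefschetz property. -/
def HasSLP {k R : Type*} [Field k] [CommRing R] [Algebra k R]
    (𝒜 : ℤ → Submodule k R) : Prop :=
  ∃ ℓ ∈ 𝒜 1, ∀ i : ℤ, 0 ≤ i → ∀ t : ℕ, 1 ≤ t → MulFullRank (𝒜 i) (𝒜 (i + t)) (ℓ ^ t)

/-- The Hilbert function of the graded algebra. -/
noncomputable def hilb {k R : Type*} [Field k] [CommRing R] [Algebra k R]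
    (𝒜 : ℤ → Submodule k R) (i : ℤ) : ℕ :=
  Module.finrank k (𝒜 i)

/-- The algebra is almost centered. -/
def AlmostCentered {k R : Type*} [Field k] [CommRing R] [Algebra k R]
    (𝒜 : ℤ → Submodule k R) : Prop :=
  ∀ i j : ℤ, i < j →
    (hilb 𝒜 i < hilb 𝒜 j → ∀ s : ℕ, hilb 𝒜 (i - s) ≤ hilb 𝒜 (j + s)) ∧
    (hilb 𝒜 j < hilb 𝒜 i → ∀ s : ℕ, hilb 𝒜 (j + s) ≤ hilb 𝒜 (i - s))

/-- `binomZ t j` is the binomial coefficient `t` choose `j` for an integer `j`,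
equal to `0` for `j < 0` or `j > t`. -/
def binomZ (t : ℕ) (j : ℤ) : ℤ := if 0 ≤ j then (t.choose j.toNat : ℤ) else 0

/-- The `(d-p) × (d-p)` integer matrix `C_{t,p,d}` whose `(r,c)` entry (with `1 ≤ r,c ≤ d-p`)
is `binom(t, d+1-r-c)`. -/
def Cmat (t p d : ℕ) : Matrix (Fin (d - p)) (Fin (d - p)) ℤ :=
  Matrix.of fun r c => binomZ t ((d : ℤ) - 1 - (r : ℕ) - (c : ℕ))

/-- The characteristic of `k` is zero, or a prime not dividing the integer `N`. -/
def CharCond (k : Type*) [Field k] (N : ℤ) : Prop :=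
  CharZero k ∨ ∃ p : ℕ, p.Prime ∧ CharP k p ∧ ¬ ((p : ℤ) ∣ N)

/-! Write `A_j = φ(B_j) ⊕ x·φ(B_{j-1})`. Since `x² = 0`, `ℓ^t = ℓ̄^t + t·x·ℓ̄^{t-1}`, so
`ℓ^t (b₀ + x b₁) = ℓ̄^t b₀ + x·ℓ̄^{t-1}(t b₀ + ℓ̄ b₁)`. In degree `0` both `A₀` and `B₀` are
spanned by `1`, and `ℓ^t = 0` iff `ℓ̄^{t-1} = 0` because `t` is invertible. When `B_{i+t} = 0`
the first summand vanishes, so the image of `·ℓ^t` on `A_i` is `x·ℓ̄^{t-1}B_i`; and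
`b₀ = -ℓ̄ b₁ / t` puts `b₀ + x b₁` in the kernel, so injectivity forces `B_{i-1} = 0`, after which
the target `A_{i+t}` is zero as well. -/

theorem add_pow_succ_of_sq_eq_zero {R : Type*} [CommRing R] {x : R} (hx : x ^ 2 = 0)
    (y : R) (n : ℕ) : (y + x) ^ (n + 1) = y ^ (n + 1) + (n + 1) * x * y ^ n := by
  induction n with
  | zero => simp
  | succ n ih =>
    rw [pow_succ, ih]
    push_cast
    linear_combination ((n : R) + 1) * y ^ n * hx

section MulMaps

variable {k R : Type*} [Field k] [CommRing R] [Algebra k R] {V W : Submodule k R} {a : R}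

theorem mulFullRank_zero_iff : MulFullRank V W 0 ↔ V = ⊥ ∨ W = ⊥ := by
  simp only [MulFullRank, MulInjOn, MulSurjOnto, zero_mul, forall_const, exists_and_right,
    Submodule.eq_bot_iff]
  constructor
  · rintro (hV | hW)
    · exact Or.inl hV
    · exact Or.inr fun w hw => ((hW w hw).2).symm
  · rintro (hV | hW)
    · exact Or.inl hV
    · exact Or.inr fun w hw => ⟨⟨0, V.zero_mem⟩, (hW w hw).symm⟩

theorem mulSurjOnto_of_eq_bot (hW : W = ⊥) : MulSurjOnto V W a := by
  intro w hw
  rw [hW, Submodule.mem_bot] at hw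
  exact ⟨0, V.zero_mem, by rw [hw, mul_zero]⟩

theorem mulInjOn_of_eq_span_one (hV : V = Submodule.span k {1}) (ha : a ≠ 0) :
    MulInjOn V a := by
  intro v hv hav
  obtain ⟨c, rfl⟩ := Submodule.mem_span_singleton.1 (hV ▸ hv)
  rw [mul_smul_comm, mul_one, smul_eq_zero] at hav
  rw [hav.resolve_right ha, zero_smul]

end MulMaps

namespace IsStdGradedArtinian

variable {k R : Type*} [Field k] [CommRing R] [Algebra k R] {𝒜 : ℤ → Submodule k R}
  (h𝒜 : IsStdGradedArtinian k R 𝒜)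
include h𝒜

theorem pow_mem {ℓ : R} (hℓ : ℓ ∈ 𝒜 1) (m : ℕ) : ℓ ^ m ∈ 𝒜 m := by
  induction m with
  | zero => simpa using h𝒜.one_mem
  | succ m ih => simpa [pow_succ] using h𝒜.mul_mem ih hℓ

theorem pow_mul_mem {ℓ b : R} (hℓ : ℓ ∈ 𝒜 1) {j : ℤ} (hb : b ∈ 𝒜 j) (m : ℕ) :
    ℓ ^ m * b ∈ 𝒜 (j + m) :=
  add_comm (m : ℤ) j ▸ h𝒜.mul_mem (h𝒜.pow_mem hℓ m) hb

theorem eq_bot_of_le {j m : ℤ} (hj : 0 ≤ j) (h : 𝒜 j = ⊥) (hjm : j ≤ m) : 𝒜 m = ⊥ := by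
  induction m, hjm using Int.leInduction with
  | base => exact h
  | succ m hjm ih => rw [h𝒜.succ_eq m (hj.trans hjm), ih, Submodule.mul_bot]

theorem pow_succ_mul_eq_zero {ℓ b : R} (hℓ : ℓ ∈ 𝒜 1) {j : ℤ} {n : ℕ}
    (hbot : 𝒜 (j + n + 1) = ⊥) (hb : b ∈ 𝒜 j) : ℓ ^ (n + 1) * b = 0 := by
  have := h𝒜.pow_mul_mem hℓ hb (n + 1)
  rwa [Nat.cast_succ, ← add_assoc, hbot, Submodule.mem_bot] at this

end IsStdGradedArtinian

namespace IsCIExtension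

variable {k B A : Type*} [Field k] [CommRing B] [Algebra k B] [CommRing A] [Algebra k A]
  {𝒜 : ℤ → Submodule k B} {ℬ : ℤ → Submodule k A} {φ : B →ₐ[k] A} {x : A}
  (hext : IsCIExtension 𝒜 ℬ φ x 2)
include hext

theorem exists_eq_map_add_mul_map {j : ℤ} {c : A} (hc : c ∈ ℬ j) :
    ∃ b₀ ∈ 𝒜 j, ∃ b₁ ∈ 𝒜 (j - 1), c = φ b₀ + x * φ b₁ := by
  obtain ⟨f, hf, rfl⟩ := hext.decomp_exists j c hc
  exact ⟨f 0, by simpa using hf 0, f 1, by simpa using hf 1, by simp [Fin.sum_univ_two]⟩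

theorem map_add_mul_map_mem {j : ℤ} {b₀ b₁ : B} (h₀ : b₀ ∈ 𝒜 j) (h₁ : b₁ ∈ 𝒜 (j - 1)) :
    φ b₀ + x * φ b₁ ∈ ℬ j := by
  simpa [Fin.sum_univ_two] using
    hext.decomp_mem j ![b₀, b₁] (Fin.forall_fin_two.2 ⟨by simpa using h₀, by simpa using h₁⟩)

theorem eq_zero_of_map_add_mul_map_eq_zero {j : ℤ} {b₀ b₁ : B} (h₀ : b₀ ∈ 𝒜 j)
    (h₁ : b₁ ∈ 𝒜 (j - 1)) (h : φ b₀ + x * φ b₁ = 0) : b₀ = 0 ∧ b₁ = 0 := by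
  have := hext.decomp_unique j ![b₀, b₁]
    (Fin.forall_fin_two.2 ⟨by simpa using h₀, by simpa using h₁⟩)
    (by simpa [Fin.sum_univ_two] using h)
  exact ⟨this 0, this 1⟩

theorem x_mul_map_mem {j : ℤ} {b : B} (hb : b ∈ 𝒜 j) : x * φ b ∈ ℬ (j + 1) := by
  simpa using hext.map_add_mul_map_mem (zero_mem _) (by rwa [add_sub_cancel_right])

theorem eq_zero_of_x_mul_map_eq_zero {j : ℤ} {b : B} (hb : b ∈ 𝒜 j) (h : x * φ b = 0) :
    b = 0 :=
  (hext.eq_zero_of_map_add_mul_map_eq_zero (j := j + 1) (zero_mem _)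
    (by rwa [add_sub_cancel_right]) (by simp [h])).2

theorem eq_bot_iff {j : ℤ} : ℬ j = ⊥ ↔ 𝒜 j = ⊥ ∧ 𝒜 (j - 1) = ⊥ := by
  simp only [Submodule.eq_bot_iff]
  refine ⟨fun h => ⟨fun b hb => ?_, fun b hb => ?_⟩, fun ⟨h₀, h₁⟩ c hc => ?_⟩
  · refine (hext.eq_zero_of_map_add_mul_map_eq_zero hb (zero_mem _) ?_).1
    simpa using h _ (hext.map_mem j b hb)
  · refine (hext.eq_zero_of_map_add_mul_map_eq_zero (zero_mem _) hb ?_).2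
    simpa using h _ (hext.map_add_mul_map_mem (zero_mem _) hb)
  · obtain ⟨b₀, hb₀, b₁, hb₁, rfl⟩ := hext.exists_eq_map_add_mul_map hc
    simp [h₀ b₀ hb₀, h₁ b₁ hb₁]

theorem add_pow_succ_mul (ℓ b₀ b₁ : B) (n : ℕ) :
    (φ ℓ + x) ^ (n + 1) * (φ b₀ + x * φ b₁) =
      φ (ℓ ^ (n + 1) * b₀) + x * φ (ℓ ^ n * ((n + 1) • b₀ + ℓ * b₁)) := by
  rw [add_pow_succ_of_sq_eq_zero hext.x_pow]
  simp only [map_add, map_mul, map_pow, nsmul_eq_mul, Nat.cast_succ, map_natCast, map_one]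
  linear_combination ((n + 1) * φ ℓ ^ n * φ b₁) * hext.x_pow

theorem add_pow_succ_mul_map (ℓ b : B) (n : ℕ) :
    (φ ℓ + x) ^ (n + 1) * φ b = φ (ℓ ^ (n + 1) * b) + x * φ ((n + 1) • (ℓ ^ n * b)) := by
  have h := hext.add_pow_succ_mul ℓ b 0 n
  rwa [map_zero, mul_zero, add_zero, mul_zero, add_zero, mul_smul_comm] at h

variable {ℓ : B} {n : ℕ}

theorem add_pow_succ_eq_zero_iff (hB : IsStdGradedArtinian k B 𝒜) (hℓ : ℓ ∈ 𝒜 1)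
    (hn : ((n + 1 : ℕ) : k) ≠ 0) : (φ ℓ + x) ^ (n + 1) = 0 ↔ ℓ ^ n = 0 := by
  have h := hext.add_pow_succ_mul_map ℓ 1 n
  simp only [map_one, mul_one] at h
  rw [h]
  constructor
  · intro h0
    have hmem : (n + 1) • ℓ ^ n ∈ 𝒜 ((n + 1 : ℤ) - 1) := by
      simpa using nsmul_mem (hB.pow_mem hℓ n) (n + 1)
    have := (hext.eq_zero_of_map_add_mul_map_eq_zero
      (by exact_mod_cast hB.pow_mem hℓ (n + 1)) hmem h0).2
    rw [← Nat.cast_smul_eq_nsmul k, smul_eq_zero] at this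
    exact this.resolve_left hn
  · intro h0
    simp [pow_succ, h0]

theorem mulFullRank_degree_zero_iff (hB : IsStdGradedArtinian k B 𝒜)
    (hA : IsStdGradedArtinian k A ℬ) (hℓ : ℓ ∈ 𝒜 1) (hn : ((n + 1 : ℕ) : k) ≠ 0) :
    MulFullRank (ℬ 0) (ℬ (n + 1)) ((φ ℓ + x) ^ (n + 1)) ↔ MulFullRank (𝒜 0) (𝒜 n) (ℓ ^ n) := by
  by_cases h : ℓ ^ n = 0
  · rw [h, (hext.add_pow_succ_eq_zero_iff hB hℓ hn).2 h, mulFullRank_zero_iff,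
      mulFullRank_zero_iff, hext.eq_bot_iff, hext.eq_bot_iff, hB.neg_bot (0 - 1) (by norm_num),
      eq_self, and_true, add_sub_cancel_right,
      and_iff_right_of_imp fun hbot => hB.eq_bot_of_le (Nat.cast_nonneg n) hbot (by omega)]
  · exact iff_of_true
      (Or.inl (mulInjOn_of_eq_span_one hA.zero_spanOne
        ((hext.add_pow_succ_eq_zero_iff hB hℓ hn).not.2 h)))
      (Or.inl (mulInjOn_of_eq_span_one hB.zero_spanOne h))

theorem eq_bot_of_mulInjOn (hB : IsStdGradedArtinian k B 𝒜) (hℓ : ℓ ∈ 𝒜 1)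
    (hn : ((n + 1 : ℕ) : k) ≠ 0) {j : ℤ} (hbot : 𝒜 (j + n + 1) = ⊥)
    (hinj : MulInjOn (ℬ j) ((φ ℓ + x) ^ (n + 1))) : 𝒜 (j - 1) = ⊥ := by
  refine (Submodule.eq_bot_iff _).2 fun b₁ hb₁ => ?_
  set b₀ := -(((n + 1 : ℕ) : k)⁻¹ • (ℓ * b₁))
  have hb₀ : b₀ ∈ 𝒜 j := neg_mem (Submodule.smul_mem _ _ (by simpa using hB.mul_mem hℓ hb₁))
  have hcancel : (n + 1) • b₀ + ℓ * b₁ = 0 := by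
    rw [← Nat.cast_smul_eq_nsmul k, smul_neg, smul_inv_smul₀ hn, neg_add_cancel]
  have hker := hinj _ (hext.map_add_mul_map_mem hb₀ hb₁) (by
    rw [hext.add_pow_succ_mul, hB.pow_succ_mul_eq_zero hℓ hbot hb₀, hcancel]
    simp)
  exact (hext.eq_zero_of_map_add_mul_map_eq_zero hb₀ hb₁ hker).2

theorem mulSurjOnto_iff (hB : IsStdGradedArtinian k B 𝒜) (hℓ : ℓ ∈ 𝒜 1)
    (hn : ((n + 1 : ℕ) : k) ≠ 0) {j : ℤ} (hbot : 𝒜 (j + n + 1) = ⊥) :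
    MulSurjOnto (ℬ j) (ℬ (j + n + 1)) ((φ ℓ + x) ^ (n + 1)) ↔
      MulSurjOnto (𝒜 j) (𝒜 (j + n)) (ℓ ^ n) := by
  constructor
  · intro hS w hw
    obtain ⟨v, hv, hvw⟩ := hS _ (hext.x_mul_map_mem hw)
    obtain ⟨b₀, hb₀, b₁, hb₁, rfl⟩ := hext.exists_eq_map_add_mul_map hv
    rw [hext.add_pow_succ_mul, hB.pow_succ_mul_eq_zero hℓ hbot hb₀, map_zero, zero_add] at hvw
    have hu : (n + 1) • b₀ + ℓ * b₁ ∈ 𝒜 j :=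
      add_mem (nsmul_mem hb₀ _) (by simpa using hB.mul_mem hℓ hb₁)
    refine ⟨_, hu, sub_eq_zero.1 (hext.eq_zero_of_x_mul_map_eq_zero
      (sub_mem (hB.pow_mul_mem hℓ hu n) hw) ?_)⟩
    rw [map_sub, mul_sub, hvw, sub_self]
  · intro hS w hw
    obtain ⟨w₀, hw₀, w₁, hw₁, rfl⟩ := hext.exists_eq_map_add_mul_map hw
    rw [hbot, Submodule.mem_bot] at hw₀
    obtain ⟨u, hu, rfl⟩ := hS w₁ (by simpa using hw₁)
    refine ⟨φ (((n + 1 : ℕ) : k)⁻¹ • u), hext.map_mem _ _ (Submodule.smul_mem _ _ hu), ?_⟩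
    rw [hext.add_pow_succ_mul_map, hB.pow_succ_mul_eq_zero hℓ hbot (Submodule.smul_mem _ _ hu),
      mul_smul_comm, ← Nat.cast_smul_eq_nsmul k, smul_inv_smul₀ hn, hw₀]

theorem mulFullRank_iff_mulSurjOnto (hB : IsStdGradedArtinian k B 𝒜) (hℓ : ℓ ∈ 𝒜 1)
    (hn : ((n + 1 : ℕ) : k) ≠ 0) {j : ℤ} (hj : 0 < j) (hbot : 𝒜 (j + n + 1) = ⊥) :
    MulFullRank (ℬ j) (ℬ (j + n + 1)) ((φ ℓ + x) ^ (n + 1)) ↔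
      MulSurjOnto (𝒜 j) (𝒜 (j + n)) (ℓ ^ n) := by
  rw [← hext.mulSurjOnto_iff hB hℓ hn hbot]
  refine ⟨fun h => h.elim (fun hinj => mulSurjOnto_of_eq_bot ?_) id, Or.inr⟩
  have hprev := hext.eq_bot_of_mulInjOn hB hℓ hn hbot hinj
  rw [hext.eq_bot_iff, add_sub_cancel_right]
  exact ⟨hbot, hB.eq_bot_of_le (by omega) hprev (by omega)⟩

theorem matrix_eq_smul {ι ι' : Type*} [Fintype ι] {m : ℤ} {v : ι → B}
    (hv : LinearIndependent k v) (hvm : ∀ r, v r ∈ 𝒜 m) {b₀ : ι' → B}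
    (hkill : ∀ c, ℓ ^ (n + 1) * b₀ c = 0) {M N : Matrix ι ι' k}
    (hM : ∀ c, (φ ℓ + x) ^ (n + 1) * φ (b₀ c) = ∑ r, M r c • (x * φ (v r)))
    (hN : ∀ c, ℓ ^ n * b₀ c = ∑ r, N r c • v r) :
    M = ((n + 1 : ℕ) : k) • N := by
  ext r c
  revert r
  refine Fintype.linearIndependent_iffₛ.1 hv _ _ (sub_eq_zero.1 ?_)
  refine hext.eq_zero_of_x_mul_map_eq_zero
    (sub_mem (sum_mem fun r _ => Submodule.smul_mem _ _ (hvm r))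
      (sum_mem fun r _ => Submodule.smul_mem _ _ (hvm r))) ?_
  have h := hext.add_pow_succ_mul_map ℓ (b₀ c) n
  rw [hkill, hM, hN, ← Nat.cast_smul_eq_nsmul k] at h
  simp only [map_zero, zero_add, map_sum, map_smul, Finset.mul_sum,
    mul_smul_comm, Finset.smul_sum, smul_smul] at h
  simp only [map_sub, map_sum, map_smul, mul_sub, Finset.mul_sum, mul_smul_comm, h,
    Matrix.smul_apply, smul_eq_mul, sub_self]

end IsCIExtension

theorem statement_2_general {k B A : Type} [Field k]
    [CommRing B] [Algebra k B] [CommRing A] [Algebra k A]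
    (𝒜 : ℤ → Submodule k B) (ℬ : ℤ → Submodule k A)
    (hB : IsStdGradedArtinian k B 𝒜) (hA : IsStdGradedArtinian k A ℬ)
    (φ : B →ₐ[k] A) (x : A) (hext : IsCIExtension 𝒜 ℬ φ x 2)
    (ℓbar : B) (hℓbar : ℓbar ∈ 𝒜 1)
    (i t : ℕ) (htinv : (t : k) ≠ 0) :
    (MulFullRank (ℬ 0) (ℬ (t : ℤ)) ((φ ℓbar + x) ^ t) ↔
      MulFullRank (𝒜 0) (𝒜 ((t : ℤ) - 1)) (ℓbar ^ (t - 1)))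
    ∧
    (0 < i → 𝒜 ((i : ℤ) + t) = ⊥ →
      (MulFullRank (ℬ (i : ℤ)) (ℬ ((i : ℤ) + t)) ((φ ℓbar + x) ^ t) ↔
        MulSurjOnto (𝒜 (i : ℤ)) (𝒜 ((i : ℤ) + t - 1)) (ℓbar ^ (t - 1))))
    ∧
    (𝒜 (t : ℤ) = ⊥ → Module.finrank k (𝒜 ((t : ℤ) - 1)) = 1 →
      ∀ (b0 : Module.Basis (Fin 1) k (𝒜 0)) (bt : Module.Basis (Fin 1) k (𝒜 ((t : ℤ) - 1)))
        (M : Matrix (Fin 1) (Fin 1) k) (N : Matrix (Fin 1) (Fin 1) k),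
        (∀ c : Fin 1, (φ ℓbar + x) ^ t * φ (b0 c : B) =
            ∑ r : Fin 1, M r c • (x * φ (bt r : B))) →
        (∀ c : Fin 1, ℓbar ^ (t - 1) * (b0 c : B) = ∑ r : Fin 1, N r c • (bt r : B)) →
        M.det = (t : k) * N.det) := by
  obtain ⟨n, rfl⟩ : ∃ n, t = n + 1 :=
    Nat.exists_eq_add_one_of_ne_zero fun ht => htinv (by rw [ht, Nat.cast_zero])
  push_cast
  simp only [add_sub_cancel_right, ← add_assoc]
  refine ⟨hext.mulFullRank_degree_zero_iff hB hA hℓbar htinv,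
    fun hi hbot => hext.mulFullRank_iff_mulSurjOnto hB hℓbar htinv (by exact_mod_cast hi) hbot,
    fun hbot _ b0 bt M N hM hN => ?_⟩
  have hM_eq := hext.matrix_eq_smul (bt.linearIndependent.map' _ (Submodule.ker_subtype _))
    (fun r => (bt r).2) (fun c => hB.pow_succ_mul_eq_zero hℓbar (j := 0) (by simpa using hbot)
      (b0 c).2) hM hN
  rw [hM_eq, Matrix.det_smul, Fintype.card_fin, pow_one, Nat.cast_succ]

/-- Let `A = B ⊗ₖ k[x]/(x²)`, `ℓ̄ ∈ B₁`, `ℓ = ℓ̄ + x`, `i ≥ 0`,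
`t ≥ 1` with `t` invertible in `k`.
(1) `·ℓ^t : A₀ → A_t` has full rank iff `·ℓ̄^{t-1} : B₀ → B_{t-1}` has full rank.
(2) If `i > 0` and `B_{i+t} = 0` then `·ℓ^t : A_i → A_{i+t}` has full rank iff
`·ℓ̄^{t-1} : B_i → B_{i+t-1}` is surjective.
(3) If `B_t = 0` and `dim_k B_{t-1} = 1` then the `1 × 1` matrix `M₀^t` of
`·ℓ^t : A₀ → A_t` satisfies `det M₀^t = t · det M̄₀^{t-1}`. -/
theorem statement_2 {k B A : Type} [Field k]
    [CommRing B] [Algebra k B] [CommRing A] [Algebra k A]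
    (𝒜 : ℤ → Submodule k B) (ℬ : ℤ → Submodule k A)
    (hB : IsStdGradedArtinian k B 𝒜) (hA : IsStdGradedArtinian k A ℬ)
    (φ : B →ₐ[k] A) (x : A) (hext : IsCIExtension 𝒜 ℬ φ x 2)
    (ℓbar : B) (hℓbar : ℓbar ∈ 𝒜 1)
    (i t : ℕ) (ht : 1 ≤ t) (htinv : (t : k) ≠ 0) :
    (MulFullRank (ℬ 0) (ℬ (t : ℤ)) ((φ ℓbar + x) ^ t) ↔
      MulFullRank (𝒜 0) (𝒜 ((t : ℤ) - 1)) (ℓbar ^ (t - 1)))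
    ∧
    (0 < i → 𝒜 ((i : ℤ) + t) = ⊥ →
      (MulFullRank (ℬ (i : ℤ)) (ℬ ((i : ℤ) + t)) ((φ ℓbar + x) ^ t) ↔
        MulSurjOnto (𝒜 (i : ℤ)) (𝒜 ((i : ℤ) + t - 1)) (ℓbar ^ (t - 1))))
    ∧
    (𝒜 (t : ℤ) = ⊥ → Module.finrank k (𝒜 ((t : ℤ) - 1)) = 1 →
      ∀ (b0 : Module.Basis (Fin 1) k (𝒜 0)) (bt : Module.Basis (Fin 1) k (𝒜 ((t : ℤ) - 1)))
        (M : Matrix (Fin 1) (Fin 1) k) (N : Matrix (Fin 1) (Fin 1) k),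
        (∀ c : Fin 1, (φ ℓbar + x) ^ t * φ (b0 c : B) =
            ∑ r : Fin 1, M r c • (x * φ (bt r : B))) →
        (∀ c : Fin 1, ℓbar ^ (t - 1) * (b0 c : B) = ∑ r : Fin 1, N r c • (bt r : B)) →
        M.det = (t : k) * N.det) :=
  statement_2_general 𝒜 ℬ hB hA φ x hext ℓbar hℓbar i t htinv
end

section
/- Let k be a field of characteristic p > 0, let t be a positive integer divisible by p, let B be a standard graded artinian k-algebra, let A = B ⊗_k k[x]/(x²), let ℓ̄ ∈ B₁ be a linear form and ℓ = ℓ̄ + x ∈ A₁. Assume i > 0 and B_{i+t} ≠ 0. Then ·ℓ^t : A_i → A_{i+t} has full rank if and only if the maps ·ℓ̄^t : B_i → B_{i+t} and ·ℓ̄^t : B_{i−1} → B_{i+t−1} have full rank for the same reason. -/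
open scoped BigOperators

lemma pow_mem_graded {k R : Type*} [Field k] [CommRing R] [Algebra k R]
    {𝒜 : ℤ → Submodule k R} (hB : IsStdGradedArtinian k R 𝒜)
    {a : R} (ha : a ∈ 𝒜 1) (t : ℕ) : a ^ t ∈ 𝒜 (t : ℤ) := by
  induction t with
  | zero => simpa using hB.one_mem
  | succ n ih =>
    have h := hB.mul_mem ha ih
    rw [show (1 : ℤ) + n = ((n + 1 : ℕ) : ℤ) by push_cast; ring] at h
    rw [pow_succ']
    exact h

lemma nilp_add_pow {A : Type*} [CommRing A] (a x : A) (t : ℕ) (hx : x ^ 2 = 0)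
    (htA : (t : A) = 0) (ht2 : 2 ≤ t) : (a + x) ^ t = a ^ t := by
  rw [add_pow, Finset.sum_eq_single t]
  · simp
  · intro j hj hjt
    have hjlt : j < t := by
      have := Finset.mem_range.mp hj; omega
    by_cases hj1 : j = t - 1
    · have hc : (t.choose j : A) = 0 := by
        have hs := Nat.choose_symm (show t - 1 ≤ t by omega)
        rw [show t - (t - 1) = 1 by omega, Nat.choose_one_right] at hs
        rw [hj1, ← hs, htA]
      rw [hc, mul_zero]
    · have h2 : x ^ (t - j) = 0 := by
        have : x ^ (t - j) = x ^ 2 * x ^ (t - j - 2) := by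
          rw [← pow_add]; congr 1; omega
        rw [this, hx, zero_mul]
      rw [h2, mul_zero, zero_mul]
  · intro h; exact absurd (Finset.mem_range.mpr (Nat.lt_succ_self t)) h

/-- Let `k` be a field of characteristic `p > 0`, `t` a positive integer
divisible by `p`, `B` a standard graded artinian `k`-algebra, `A = B ⊗ₖ k[x]/(x²)`,
`ℓ̄ ∈ B₁` a linear form and `ℓ = ℓ̄ + x`.  If `i > 0` and `B_{i+t} ≠ 0`, then
`·ℓ^t : A_i → A_{i+t}` has full rank iff `·ℓ̄^t : B_i → B_{i+t}` and
`·ℓ̄^t : B_{i-1} → B_{i+t-1}` have full rank for the same reason. -/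
theorem statement_4 {k B A : Type} [Field k]
    [CommRing B] [Algebra k B] [CommRing A] [Algebra k A]
    (p : ℕ) (hp : p.Prime) [CharP k p]
    (t : ℕ) (ht : 0 < t) (hpt : p ∣ t)
    (𝒜 : ℤ → Submodule k B) (ℬ : ℤ → Submodule k A)
    (hB : IsStdGradedArtinian k B 𝒜) (hA : IsStdGradedArtinian k A ℬ)
    (φ : B →ₐ[k] A) (x : A) (hext : IsCIExtension 𝒜 ℬ φ x 2)
    (ℓbar : B) (hℓbar : ℓbar ∈ 𝒜 1)
    (i : ℕ) (hi : 0 < i) (hBit : 𝒜 ((i : ℤ) + t) ≠ ⊥) :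
    MulFullRank (ℬ (i : ℤ)) (ℬ ((i : ℤ) + t)) ((φ ℓbar + x) ^ t) ↔
      ((MulInjOn (𝒜 (i : ℤ)) (ℓbar ^ t) ∧ MulInjOn (𝒜 ((i : ℤ) - 1)) (ℓbar ^ t)) ∨
       (MulSurjOnto (𝒜 (i : ℤ)) (𝒜 ((i : ℤ) + t)) (ℓbar ^ t) ∧
        MulSurjOnto (𝒜 ((i : ℤ) - 1)) (𝒜 ((i : ℤ) + t - 1)) (ℓbar ^ t))) := by
  -- basic facts
  have ht2 : 2 ≤ t := le_trans hp.two_le (Nat.le_of_dvd ht hpt)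
  have htA : (t : A) = 0 := by
    have hk : (t : k) = 0 := (CharP.cast_eq_zero_iff k p t).mpr hpt
    rw [← map_natCast (algebraMap k A) t, hk, map_zero]
  have hkey : (φ ℓbar + x) ^ t = φ (ℓbar ^ t) := by
    rw [nilp_add_pow _ _ t hext.x_pow htA ht2, map_pow]
  have hLmem : ℓbar ^ t ∈ 𝒜 (t : ℤ) := pow_mem_graded hB hℓbar t
  -- decomposition helpers for d = 2
  have hcond : ∀ (j : ℤ) (b0 b1 : B), b0 ∈ 𝒜 j → b1 ∈ 𝒜 (j - 1) →
      ∀ q : Fin 2, (![b0, b1] : Fin 2 → B) q ∈ 𝒜 (j - ((q : ℕ) : ℤ)) := by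
    intro j b0 b1 h0 h1 q
    fin_cases q <;> simpa
  have hmem2 : ∀ (j : ℤ) (b0 b1 : B), b0 ∈ 𝒜 j → b1 ∈ 𝒜 (j - 1) →
      φ b0 + x * φ b1 ∈ ℬ j := by
    intro j b0 b1 h0 h1
    have := hext.decomp_mem j ![b0, b1] (hcond j b0 b1 h0 h1)
    simpa [Fin.sum_univ_two] using this
  have huniq2 : ∀ (j : ℤ) (b0 b1 : B), b0 ∈ 𝒜 j → b1 ∈ 𝒜 (j - 1) →
      φ b0 + x * φ b1 = 0 → b0 = 0 ∧ b1 = 0 := by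
    intro j b0 b1 h0 h1 heq
    have := hext.decomp_unique j ![b0, b1] (hcond j b0 b1 h0 h1)
      (by simpa [Fin.sum_univ_two] using heq)
    exact ⟨by simpa using this 0, by simpa using this 1⟩
  have hexist2 : ∀ j : ℤ, ∀ c ∈ ℬ j, ∃ b0 b1 : B,
      b0 ∈ 𝒜 j ∧ b1 ∈ 𝒜 (j - 1) ∧ c = φ b0 + x * φ b1 := by
    intro j c hc
    obtain ⟨f, hf, hcf⟩ := hext.decomp_exists j c hc
    refine ⟨f 0, f 1, by simpa using hf 0, by simpa using hf 1, ?_⟩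
    simpa [Fin.sum_univ_two] using hcf
  have hφinj : ∀ (j : ℤ) (b : B), b ∈ 𝒜 j → φ b = 0 → b = 0 := by
    intro j b hb h
    exact (huniq2 j b 0 hb (zero_mem _) (by simpa using h)).1
  constructor
  · rintro (hinj | hsurj)
    · left
      constructor
      · intro v hv hzero
        refine hφinj _ v hv ?_
        refine hinj (φ v) (hext.map_mem _ v hv) ?_
        rw [hkey, ← map_mul, hzero, map_zero]
      · intro v hv hzero
        have hxv : x * φ v ∈ ℬ (i : ℤ) := by
          simpa using hmem2 (i : ℤ) 0 v (zero_mem _) hv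
        have hz : x * φ v = 0 := by
          refine hinj (x * φ v) hxv ?_
          rw [hkey]
          calc φ (ℓbar ^ t) * (x * φ v) = x * φ (ℓbar ^ t * v) := by
                rw [map_mul]; ring
            _ = 0 := by rw [hzero, map_zero, mul_zero]
        exact (huniq2 (i : ℤ) 0 v (zero_mem _) hv (by simpa using hz)).2
    · right
      constructor
      · intro w hw
        obtain ⟨u, hu, huw⟩ := hsurj (φ w) (hext.map_mem _ w hw)
        obtain ⟨b0, b1, hb0, hb1, rfl⟩ := hexist2 _ u hu
        rw [hkey] at huw
        have key : φ (ℓbar ^ t * b0 - w) + x * φ (ℓbar ^ t * b1) = 0 := by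
          rw [map_sub, map_mul, map_mul]
          linear_combination huw
        have mem0 : ℓbar ^ t * b0 - w ∈ 𝒜 ((i : ℤ) + t) := by
          have h := hB.mul_mem hLmem hb0
          rw [add_comm] at h
          exact sub_mem h hw
        have mem1 : ℓbar ^ t * b1 ∈ 𝒜 ((i : ℤ) + t - 1) := by
          have h := hB.mul_mem hLmem hb1
          rwa [show (t : ℤ) + ((i : ℤ) - 1) = (i : ℤ) + t - 1 by ring] at h
        have := huniq2 ((i : ℤ) + t) _ _ mem0 mem1 key
        exact ⟨b0, hb0, sub_eq_zero.mp this.1⟩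
      · intro w hw
        have hxw : x * φ w ∈ ℬ ((i : ℤ) + t) := by
          simpa using hmem2 ((i : ℤ) + t) 0 w (zero_mem _) hw
        obtain ⟨u, hu, huw⟩ := hsurj (x * φ w) hxw
        obtain ⟨b0, b1, hb0, hb1, rfl⟩ := hexist2 _ u hu
        rw [hkey] at huw
        have key : φ (ℓbar ^ t * b0) + x * φ (ℓbar ^ t * b1 - w) = 0 := by
          rw [map_sub, map_mul, map_mul]
          linear_combination huw
        have mem0 : ℓbar ^ t * b0 ∈ 𝒜 ((i : ℤ) + t) := by
          have h := hB.mul_mem hLmem hb0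
          rwa [add_comm] at h
        have mem1 : ℓbar ^ t * b1 - w ∈ 𝒜 ((i : ℤ) + t - 1) := by
          have h := hB.mul_mem hLmem hb1
          rw [show (t : ℤ) + ((i : ℤ) - 1) = (i : ℤ) + t - 1 by ring] at h
          exact sub_mem h hw
        have := huniq2 ((i : ℤ) + t) _ _ mem0 mem1 key
        exact ⟨b1, hb1, sub_eq_zero.mp this.2⟩
  · rintro (⟨h0, h1⟩ | ⟨h0, h1⟩)
    · left
      intro v hv hzero
      obtain ⟨b0, b1, hb0, hb1, rfl⟩ := hexist2 _ v hv
      rw [hkey] at hzero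
      have key : φ (ℓbar ^ t * b0) + x * φ (ℓbar ^ t * b1) = 0 := by
        rw [map_mul, map_mul]
        linear_combination hzero
      have mem0 : ℓbar ^ t * b0 ∈ 𝒜 ((i : ℤ) + t) := by
        have h := hB.mul_mem hLmem hb0
        rwa [add_comm] at h
      have mem1 : ℓbar ^ t * b1 ∈ 𝒜 ((i : ℤ) + t - 1) := by
        have h := hB.mul_mem hLmem hb1
        rwa [show (t : ℤ) + ((i : ℤ) - 1) = (i : ℤ) + t - 1 by ring] at h
      have huq := huniq2 ((i : ℤ) + t) _ _ mem0 mem1 key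
      have e0 : b0 = 0 := h0 b0 hb0 huq.1
      have e1 : b1 = 0 := h1 b1 hb1 huq.2
      rw [e0, e1, map_zero, mul_zero, add_zero]
    · right
      intro w hw
      obtain ⟨g0, g1, hg0, hg1, rfl⟩ := hexist2 _ w hw
      obtain ⟨b0, hb0, e0⟩ := h0 g0 hg0
      obtain ⟨b1, hb1, e1⟩ := h1 g1 hg1
      refine ⟨φ b0 + x * φ b1, hmem2 _ _ _ hb0 hb1, ?_⟩
      rw [hkey, ← e0, ← e1, map_mul, map_mul]
      ring
end

section
/- Let k be a field of prime characteristic p, let A = k[x₁,…,xₙ]/(x₁²,…,xₙ²), and let ℓ = x₁ + ⋯ + xₙ. For any integers i ≥ 0 and t ≥ 1, the multiplication map ·ℓ^t : A_i → A_{i+t} has full rank if and only if i + t > n or p > min{i+t, n−i}. -/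
/-- The ideal `(x₁², …, xₙ²)` of the polynomial ring. -/
noncomputable def sqIdeal (k : Type) [Field k] (n : ℕ) : Ideal (MvPolynomial (Fin n) k) :=
  Ideal.span { f : MvPolynomial (Fin n) k | ∃ j : Fin n, f = MvPolynomial.X j ^ 2 }

/-- The degree-`i` component of `A = k[x₁,…,xₙ]/(x₁²,…,xₙ²)`, i.e. the image of the
degree-`i` homogeneous polynomials. -/
noncomputable def sqComp (k : Type) [Field k] (n i : ℕ) :
    Submodule k (MvPolynomial (Fin n) k ⧸ sqIdeal k n) :=
  Submodule.map (Ideal.Quotient.mkₐ k (sqIdeal k n)).toLinearMap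
    (MvPolynomial.homogeneousSubmodule (Fin n) k i)

/-- The linear form `ℓ = x₁ + ⋯ + xₙ` in `k[x₁,…,xₙ]/(x₁²,…,xₙ²)`. -/
noncomputable def sqSumVars (k : Type) [Field k] (n : ℕ) :
    MvPolynomial (Fin n) k ⧸ sqIdeal k n :=
  Ideal.Quotient.mkₐ k (sqIdeal k n) (∑ j : Fin n, MvPolynomial.X j)

/-!
Identify `A_i` with the span of the squarefree monomials `x_S`, `|S| = i`. Two computations
drive the "only if" direction: `ℓ^p = ∑ x_j^p = 0`, and for `|R| = r` disjoint from `S`,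
`ℓ^r x_S x_(S ∪ R)ᶜ = r! x_[n]`, which is nonzero when `r < p`. With `r = p - t`, the element
`ℓ^r x_S` is then a nonzero kernel element of `·ℓ^t` when `p ≤ i + t`, and pairs nontrivially
with a monomial of degree `i + t` outside the image when `p ≤ n - i`.

Conversely, injectivity when `i + t < p` and `2i + t ≤ n` is proved by induction on the number of
variables, splitting off one variable at a time. Surjectivity when `n ≤ 2i + t` and `n - i < p`
follows by duality from injectivity in the complementary degree `n - i - t`.
-/

open MvPolynomial Finset

noncomputable section

abbrev SqAlg (k : Type) [Field k] (n : ℕ) := MvPolynomial (Fin n) k ⧸ sqIdeal k n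

variable {k : Type} [Field k] {n : ℕ}

lemma add_pow_succ_of_mul_self_eq_zero {R : Type*} [CommRing R] {x : R} (hx : x * x = 0)
    (y : R) (s : ℕ) : (y + x) ^ (s + 1) = y ^ (s + 1) + (s + 1 : ℕ) * (x * y ^ s) := by
  induction s with
  | zero => simp
  | succ s ih =>
    rw [pow_succ, ih]
    push_cast
    linear_combination ((s + 1 : R) * y ^ s) * hx

lemma add_pow_mul_of_mul_eq_zero {R : Type*} [CommSemiring R] {x y z : R} (h : y * z = 0)
    (r : ℕ) : (x + y) ^ r * z = x ^ r * z := by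
  induction r with
  | zero => simp
  | succ r ih =>
    rw [pow_succ', mul_assoc, ih, add_mul, mul_left_comm y, h, mul_zero, add_zero, ← mul_assoc,
      ← pow_succ']

lemma natCast_ne_zero_of_lt {p : ℕ} [CharP k p] {m : ℕ} (h0 : 0 < m) (hm : m < p) :
    (m : k) ≠ 0 := by
  rw [Ne, CharP.cast_eq_zero_iff k p]
  exact fun hd => absurd (Nat.le_of_dvd h0 hd) (by omega)

lemma natCast_factorial_ne_zero {p : ℕ} (hp : p.Prime) [CharP k p] {r : ℕ} (hr : r < p) :
    (r.factorial : k) ≠ 0 := by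
  rw [Ne, CharP.cast_eq_zero_iff k p, hp.dvd_factorial]
  omega

lemma eq_zero_of_natCast_mul_eq_zero {A : Type*} [Ring A] [Algebra k A] {m : ℕ}
    (hm : (m : k) ≠ 0) {z : A} (h : (m : A) * z = 0) : z = 0 := by
  rwa [← map_natCast (algebraMap k A), ← Algebra.smul_def, smul_eq_zero, or_iff_right hm] at h

lemma natCast_mul_mem {A : Type*} [Ring A] [Algebra k A] {M : Submodule k A} {z : A}
    (hz : z ∈ M) (m : ℕ) : (m : A) * z ∈ M := by
  simpa [nsmul_eq_mul] using M.nsmul_mem hz m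

lemma mem_sqIdeal_iff {f : MvPolynomial (Fin n) k} :
    f ∈ sqIdeal k n ↔ ∀ d ∈ f.support, ∃ j, 2 ≤ d j := by
  have : sqIdeal k n = Ideal.span
      ((fun d => monomial d (1 : k)) '' Set.range fun j => Finsupp.single j 2) := by
    rw [sqIdeal, ← Set.range_comp]
    congr 1
    ext f
    simp [X_pow_eq_monomial, eq_comm]
  simp [this, mem_ideal_span_monomial_image, Finsupp.single_le_iff]

lemma X_sq_mem_sqIdeal (j : Fin n) : (X j : MvPolynomial (Fin n) k) ^ 2 ∈ sqIdeal k n :=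
  Ideal.subset_span ⟨j, rfl⟩

variable (k) in
def sqMonomial (S : Finset (Fin n)) : SqAlg k n := Ideal.Quotient.mk _ (∏ j ∈ S, X j)

variable (k) in
def sqLinForm (U : Finset (Fin n)) : SqAlg k n := ∑ j ∈ U, sqMonomial k {j}

variable (k) in
def sqSpan (U : Finset (Fin n)) (i : ℕ) : Submodule k (SqAlg k n) :=
  Submodule.span k (sqMonomial k '' {S | S ⊆ U ∧ S.card = i})

lemma prod_X_eq_monomial (S : Finset (Fin n)) :
    (∏ j ∈ S, X j : MvPolynomial (Fin n) k) = monomial (∑ j ∈ S, Finsupp.single j 1) 1 := by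
  simp_rw [X, monomial_sum_one]

lemma sqMonomial_ne_zero (S : Finset (Fin n)) : sqMonomial k S ≠ 0 := by
  classical
  rw [sqMonomial, Ne, Ideal.Quotient.eq_zero_iff_mem, mem_sqIdeal_iff, prod_X_eq_monomial]
  simp only [support_monomial, one_ne_zero, if_false, mem_singleton, forall_eq, not_exists,
    not_le, Finsupp.finsetSum_apply, Finsupp.single_apply, sum_ite_eq']
  intro j
  split_ifs <;> omega

@[simp]
lemma sqMonomial_empty : sqMonomial k (∅ : Finset (Fin n)) = 1 := by
  simp [sqMonomial]

lemma sqMonomial_mul_of_disjoint {S T : Finset (Fin n)} (h : Disjoint S T) :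
    sqMonomial k S * sqMonomial k T = sqMonomial k (S ∪ T) := by
  rw [sqMonomial, sqMonomial, sqMonomial, ← map_mul, prod_union h]

lemma sqMonomial_mul_of_not_disjoint {S T : Finset (Fin n)} (h : ¬ Disjoint S T) :
    sqMonomial k S * sqMonomial k T = 0 := by
  obtain ⟨j, hjS, hjT⟩ := not_disjoint_iff.mp h
  rw [sqMonomial, sqMonomial, ← map_mul, Ideal.Quotient.eq_zero_iff_mem,
    ← mul_prod_erase S _ hjS, ← mul_prod_erase T _ hjT, mul_mul_mul_comm, ← sq]
  exact Ideal.mul_mem_right _ _ (X_sq_mem_sqIdeal j)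

lemma sqMonomial_mul_compl (S : Finset (Fin n)) :
    sqMonomial k S * sqMonomial k Sᶜ = sqMonomial k univ := by
  rw [sqMonomial_mul_of_disjoint disjoint_compl_right, union_compl]

lemma sqMonomial_mem_sqSpan {U S : Finset (Fin n)} {i : ℕ} (hS : S ⊆ U) (hc : S.card = i) :
    sqMonomial k S ∈ sqSpan k U i :=
  Submodule.subset_span ⟨S, ⟨hS, hc⟩, rfl⟩

lemma sqSpan_eq_bot {U : Finset (Fin n)} {i : ℕ} (h : U.card < i) : sqSpan k U i = ⊥ := by
  rw [sqSpan, Submodule.span_eq_bot]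
  rintro _ ⟨S, ⟨hS, hc⟩, rfl⟩
  have := card_le_card hS
  omega

lemma mul_mem_sqSpan {U V : Finset (Fin n)} {i j : ℕ} {x y : SqAlg k n}
    (hx : x ∈ sqSpan k U i) (hy : y ∈ sqSpan k V j) : x * y ∈ sqSpan k (U ∪ V) (i + j) := by
  classical
  suffices sqSpan k U i * sqSpan k V j ≤ sqSpan k (U ∪ V) (i + j) from
    this (Submodule.mul_mem_mul hx hy)
  rw [sqSpan, sqSpan, Submodule.span_mul_span, Submodule.span_le]
  rintro _ ⟨_, ⟨S, ⟨hSU, rfl⟩, rfl⟩, _, ⟨T, ⟨hTV, rfl⟩, rfl⟩, rfl⟩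
  change sqMonomial k S * sqMonomial k T ∈ _
  by_cases h : Disjoint S T
  · rw [sqMonomial_mul_of_disjoint h]
    exact sqMonomial_mem_sqSpan (union_subset_union hSU hTV) (card_union_of_disjoint h)
  · rw [sqMonomial_mul_of_not_disjoint h]
    exact Submodule.zero_mem _

lemma sqLinForm_pow_mem_sqSpan (U : Finset (Fin n)) (t : ℕ) :
    sqLinForm k U ^ t ∈ sqSpan k U t := by
  induction t with
  | zero => simpa using sqMonomial_mem_sqSpan (k := k) (empty_subset U) rfl
  | succ t ih =>
    have h1 : sqLinForm k U ∈ sqSpan k U 1 :=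
      Submodule.sum_mem _ fun j hj => sqMonomial_mem_sqSpan (singleton_subset_iff.mpr hj) rfl
    simpa [pow_succ] using mul_mem_sqSpan ih h1

lemma sqLinForm_pow_mul_mem_sqSpan {U : Finset (Fin n)} {i : ℕ} {v : SqAlg k n}
    (hv : v ∈ sqSpan k U i) (t : ℕ) : sqLinForm k U ^ t * v ∈ sqSpan k U (t + i) := by
  simpa using mul_mem_sqSpan (sqLinForm_pow_mem_sqSpan U t) hv

lemma mk_monomial_mem_sqSpan (d : Fin n →₀ ℕ) (c : k) :
    Ideal.Quotient.mkₐ k (sqIdeal k n) (monomial d c) ∈ sqSpan k univ d.degree := by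
  classical
  by_cases hd : ∀ j, d j ≤ 1
  · have hd_eq : ∑ j ∈ d.support, Finsupp.single j 1 = d := by
      ext j
      have := hd j
      simp only [Finsupp.finsetSum_apply, Finsupp.single_apply, sum_ite_eq',
        Finsupp.mem_support_iff]
      split_ifs <;> omega
    have hdeg : d.degree = d.support.card := by
      rw [Finsupp.degree_apply, card_eq_sum_ones]
      refine sum_congr rfl fun j hj => ?_
      have := hd j
      have := Finsupp.mem_support_iff.mp hj
      omega
    rw [← mul_one c, ← smul_eq_mul, ← smul_monomial, map_smul, ← hd_eq, ← prod_X_eq_monomial,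
      hd_eq, hdeg]
    exact Submodule.smul_mem _ _ (sqMonomial_mem_sqSpan (subset_univ _) rfl)
  · obtain ⟨j, hj⟩ := not_forall.mp hd
    have : monomial d c ∈ sqIdeal k n := mem_sqIdeal_iff.mpr fun e he =>
      ⟨j, by rw [mem_singleton.mp (support_monomial_subset he)]; omega⟩
    rw [Ideal.Quotient.mkₐ_eq_mk, Ideal.Quotient.eq_zero_iff_mem.mpr this]
    exact Submodule.zero_mem _

lemma sqComp_eq_sqSpan (i : ℕ) : sqComp k n i = sqSpan k univ i := by
  apply le_antisymm
  · rw [sqComp, homogeneousSubmodule_eq_finsupp_supported,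
      AddMonoidAlgebra.supported_eq_span_single, Submodule.map_span, Submodule.span_le]
    rintro _ ⟨_, ⟨d, hd : d.degree = i, rfl⟩, rfl⟩
    simpa [hd, single_eq_monomial] using mk_monomial_mem_sqSpan (k := k) d 1
  · rw [sqSpan, Submodule.span_le]
    rintro _ ⟨S, ⟨-, rfl⟩, rfl⟩
    refine ⟨∏ j ∈ S, X j, ?_, rfl⟩
    rw [SetLike.mem_coe, mem_homogeneousSubmodule, prod_X_eq_monomial]
    exact isHomogeneous_monomial _ (by simp [map_sum])

lemma sqSumVars_eq_sqLinForm : sqSumVars k n = sqLinForm k univ := by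
  simp [sqSumVars, sqLinForm, sqMonomial]

lemma sqMonomial_mul_compl_eq_zero {S T : Finset (Fin n)} (hc : T.card = S.card) (hne : T ≠ S) :
    sqMonomial k T * sqMonomial k Sᶜ = 0 :=
  sqMonomial_mul_of_not_disjoint fun h =>
    hne (eq_of_subset_of_card_le (disjoint_compl_right_iff.mp h) hc.ge)

lemma eq_zero_of_forall_mul_sqMonomial_compl_eq_zero {U : Finset (Fin n)} {c : ℕ}
    {x : SqAlg k n} (hx : x ∈ sqSpan k U c)
    (h : ∀ S ⊆ U, S.card = c → x * sqMonomial k Sᶜ = 0) : x = 0 := by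
  rw [sqSpan, Finsupp.mem_span_image_iff_linearCombination] at hx
  obtain ⟨l, hl, rfl⟩ := hx
  suffices l = 0 by rw [this, map_zero]
  ext S
  by_contra hS
  obtain ⟨hSU, hSc⟩ := hl (Finsupp.mem_support_iff.mpr hS)
  have hpair : Finsupp.linearCombination k (sqMonomial k) l * sqMonomial k Sᶜ
      = l S • sqMonomial k univ := by
    rw [Finsupp.linearCombination_apply, Finsupp.sum_mul, Finsupp.sum_eq_single S]
    · rw [smul_mul_assoc, sqMonomial_mul_compl]
    · intro T hT hTS
      have hTc := (hl (Finsupp.mem_support_iff.mpr hT)).2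
      rw [smul_mul_assoc, sqMonomial_mul_compl_eq_zero (hTc.trans hSc.symm) hTS, smul_zero]
    · simp
  rw [h S hSU hSc, eq_comm, smul_eq_zero] at hpair
  exact hpair.elim hS (sqMonomial_ne_zero _)

lemma sqMonomial_singleton_mul_self (a : Fin n) :
    sqMonomial k {a} * sqMonomial k {a} = 0 :=
  sqMonomial_mul_of_not_disjoint (by simp)

lemma eq_zero_of_sqMonomial_singleton_mul_eq_zero {U : Finset (Fin n)} {a : Fin n} (ha : a ∉ U)
    {c : ℕ} {y : SqAlg k n} (hy : y ∈ sqSpan k U c) (h : sqMonomial k {a} * y = 0) : y = 0 := by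
  refine eq_zero_of_forall_mul_sqMonomial_compl_eq_zero hy fun S hSU _ => ?_
  have haS : a ∈ Sᶜ := mem_compl.mpr fun h => ha (hSU h)
  rw [← insert_erase haS, insert_eq,
    ← sqMonomial_mul_of_disjoint (disjoint_singleton_left.mpr (notMem_erase a _)),
    ← mul_assoc, mul_comm y, h, zero_mul]

lemma eq_zero_of_add_sqMonomial_singleton_mul_eq_zero {U : Finset (Fin n)} {a : Fin n}
    (ha : a ∉ U) {c c' : ℕ} {f g : SqAlg k n} (hf : f ∈ sqSpan k U c)
    (hg : g ∈ sqSpan k U c') (h : f + sqMonomial k {a} * g = 0) : f = 0 ∧ g = 0 := by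
  have hf0 : f = 0 := eq_zero_of_sqMonomial_singleton_mul_eq_zero ha hf <| by
    linear_combination sqMonomial k {a} * h - g * sqMonomial_singleton_mul_self (k := k) a
  rw [hf0, zero_add] at h
  exact ⟨hf0, eq_zero_of_sqMonomial_singleton_mul_eq_zero ha hg h⟩

lemma exists_eq_add_sqMonomial_singleton_mul {U : Finset (Fin n)} {a : Fin n} {i : ℕ}
    {v : SqAlg k n} (hv : v ∈ sqSpan k (insert a U) i) :
    ∃ f ∈ sqSpan k U i, ∃ g ∈ sqSpan k U (i - 1), (i = 0 → g = 0) ∧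
      v = f + sqMonomial k {a} * g := by
  induction hv using Submodule.span_induction with
  | mem x hx =>
    obtain ⟨S, ⟨hS, hc⟩, rfl⟩ := hx
    by_cases haS : a ∈ S
    · refine ⟨0, Submodule.zero_mem _, sqMonomial k (S.erase a), ?_, ?_, ?_⟩
      · exact sqMonomial_mem_sqSpan ((erase_subset_erase a hS).trans (erase_insert_subset a U))
          (by rw [card_erase_of_mem haS, hc])
      · intro hi
        exact absurd (hc.trans hi) (card_ne_zero_of_mem haS)
      · rw [zero_add, sqMonomial_mul_of_disjoint (disjoint_singleton_left.mpr (notMem_erase a S)),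
          ← insert_eq, insert_erase haS]
    · exact ⟨sqMonomial k S, sqMonomial_mem_sqSpan ((subset_insert_iff_of_notMem haS).mp hS) hc,
        0, Submodule.zero_mem _, fun _ => rfl, by rw [mul_zero, add_zero]⟩
  | zero => exact ⟨0, Submodule.zero_mem _, 0, Submodule.zero_mem _, fun _ => rfl, by simp⟩
  | add x y _ _ hx hy =>
    obtain ⟨f₁, hf₁, g₁, hg₁, hi₁, rfl⟩ := hx
    obtain ⟨f₂, hf₂, g₂, hg₂, hi₂, rfl⟩ := hy
    exact ⟨f₁ + f₂, Submodule.add_mem _ hf₁ hf₂, g₁ + g₂, Submodule.add_mem _ hg₁ hg₂,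
      fun hi => by rw [hi₁ hi, hi₂ hi, add_zero], by ring⟩
  | smul r x _ hx =>
    obtain ⟨f, hf, g, hg, hi, rfl⟩ := hx
    exact ⟨r • f, Submodule.smul_mem _ r hf, r • g, Submodule.smul_mem _ r hg,
      fun h => by rw [hi h, smul_zero], by rw [smul_add, mul_smul_comm]⟩

lemma sqLinForm_insert {U : Finset (Fin n)} {a : Fin n} (ha : a ∉ U) :
    sqLinForm k (insert a U) = sqLinForm k U + sqMonomial k {a} := by
  rw [sqLinForm, sum_insert ha, add_comm, sqLinForm]

lemma sqLinForm_insert_pow_succ_mul {U : Finset (Fin n)} {a : Fin n} (ha : a ∉ U) (s : ℕ)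
    (f g : SqAlg k n) :
    sqLinForm k (insert a U) ^ (s + 1) * (f + sqMonomial k {a} * g) =
      sqLinForm k U ^ (s + 1) * f + sqMonomial k {a} *
        ((s + 1 : ℕ) * (sqLinForm k U ^ s * f) + sqLinForm k U ^ (s + 1) * g) := by
  have hsq := sqMonomial_singleton_mul_self (k := k) a
  rw [sqLinForm_insert ha, add_pow_succ_of_mul_self_eq_zero hsq]
  linear_combination ((s + 1 : ℕ) * sqLinForm k U ^ s * g) * hsq

/-- Induction on the set of variables: writing `v = f + x_a g` with `f, g` free of `x_a`, the
equation splits into `ℓ'^t f = 0` and `t ℓ'^(t-1) f + ℓ'^t g = 0`; then `ℓ'^(t+1) g = 0` gives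
`g = 0`, and `t < p` gives `ℓ'^(t-1) f = 0`, both within the range of the induction. -/
theorem eq_zero_of_sqLinForm_pow_mul_eq_zero {p : ℕ} [CharP k p] (U : Finset (Fin n))
    {i t : ℕ} (hp : i + t < p) (hU : 2 * i + t ≤ U.card) {v : SqAlg k n}
    (hv : v ∈ sqSpan k U i) (h : sqLinForm k U ^ t * v = 0) : v = 0 := by
  classical
  induction U using Finset.induction_on generalizing i t v with
  | empty =>
    obtain rfl : t = 0 := by simp at hU; omega
    simpa using h
  | @insert a U ha ih =>
    rcases t with _ | s
    · simpa using h
    rw [card_insert_of_notMem ha] at hU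
    obtain ⟨f, hf, g, hg, hg0, rfl⟩ := exists_eq_add_sqMonomial_singleton_mul hv
    rw [sqLinForm_insert_pow_succ_mul ha] at h
    have hrest : (s + 1 : ℕ) * (sqLinForm k U ^ s * f) + sqLinForm k U ^ (s + 1) * g
        ∈ sqSpan k U (s + i) := by
      refine Submodule.add_mem _ (natCast_mul_mem (sqLinForm_pow_mul_mem_sqSpan hf s) _) ?_
      rcases Nat.eq_zero_or_pos i with rfl | hi
      · rw [hg0 rfl, mul_zero]
        exact Submodule.zero_mem _
      · simpa [show s + 1 + (i - 1) = s + i by omega] using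
          sqLinForm_pow_mul_mem_sqSpan hg (s + 1)
    obtain ⟨hF, hG⟩ := eq_zero_of_add_sqMonomial_singleton_mul_eq_zero ha
      (sqLinForm_pow_mul_mem_sqSpan hf _) hrest h
    obtain rfl : g = 0 := by
      rcases Nat.eq_zero_or_pos i with rfl | hi
      · exact hg0 rfl
      refine ih (i := i - 1) (t := s + 2) (by omega) (by omega) hg ?_
      linear_combination sqLinForm k U * hG - ((s + 1 : ℕ) : SqAlg k n) * hF
    rw [mul_zero, add_zero] at hG
    rw [ih (by omega) (by omega) hf (eq_zero_of_natCast_mul_eq_zero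
      (natCast_ne_zero_of_lt (k := k) (p := p) (by omega) (by omega)) hG), mul_zero, add_zero]

lemma sqLinForm_pow_eq_zero {p : ℕ} (hp : p.Prime) [CharP k p] (U : Finset (Fin n)) {s : ℕ}
    (hs : p ≤ s) : sqLinForm k U ^ s = 0 := by
  have := Fact.mk hp
  refine pow_eq_zero_of_le hs ?_
  simp only [sqLinForm, sqMonomial, prod_singleton, ← map_sum, ← map_pow, sum_pow_char,
    Ideal.Quotient.eq_zero_iff_mem]
  refine Submodule.sum_mem _ fun j _ => ?_
  rw [← Nat.sub_add_cancel hp.two_le, pow_add]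
  exact Ideal.mul_mem_left _ _ (X_sq_mem_sqIdeal j)

lemma sqLinForm_pow_mul_sqMonomial_compl {U R : Finset (Fin n)} (hR : R ⊆ U) (r : ℕ) :
    sqLinForm k U ^ r * sqMonomial k Rᶜ = sqLinForm k R ^ r * sqMonomial k Rᶜ := by
  rw [sqLinForm, ← sum_sdiff hR, add_comm]
  refine add_pow_mul_of_mul_eq_zero ?_ r
  rw [sum_mul]
  exact sum_eq_zero fun j hj => sqMonomial_mul_of_not_disjoint <| not_disjoint_iff.mpr
    ⟨j, mem_singleton_self j, mem_compl.mpr (mem_sdiff.mp hj).2⟩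

lemma sqLinForm_pow_card (R : Finset (Fin n)) :
    sqLinForm k R ^ R.card = (R.card.factorial : SqAlg k n) * sqMonomial k R := by
  classical
  induction R using Finset.induction_on with
  | empty => simp
  | @insert a R ha ih =>
    have hvanish : sqLinForm k R ^ (R.card + 1) = 0 := by
      simpa [sqSpan_eq_bot (k := k) (Nat.lt_succ_self R.card)] using
        sqLinForm_pow_mem_sqSpan (k := k) R (R.card + 1)
    rw [card_insert_of_notMem ha, sqLinForm_insert ha,
      add_pow_succ_of_mul_self_eq_zero (sqMonomial_singleton_mul_self a), hvanish, ih,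
      insert_eq, ← sqMonomial_mul_of_disjoint (disjoint_singleton_left.mpr ha),
      Nat.factorial_succ]
    push_cast
    ring

/-- Multiplying `ℓ^r * x_S` by the complement of `S ∪ R`, for `R` of size `r`, leaves only the
term `x_R` of `ℓ^r`, with multiplicity `r!`. -/
lemma exists_sqLinForm_pow_mul_sqMonomial_mul_eq {U S : Finset (Fin n)} (hS : S ⊆ U) {r : ℕ}
    (hr : S.card + r ≤ U.card) :
    ∃ T : Finset (Fin n), T.card = n - S.card - r ∧
      sqLinForm k U ^ r * sqMonomial k S * sqMonomial k T =
        (r.factorial : SqAlg k n) * sqMonomial k univ := by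
  obtain ⟨R, hRUS, rfl⟩ := exists_subset_card_eq (s := U \ S) (n := r)
    (by rw [card_sdiff_of_subset hS]; omega)
  have hSR : Disjoint S R := disjoint_of_subset_right hRUS disjoint_sdiff
  refine ⟨(S ∪ R)ᶜ, ?_, ?_⟩
  · rw [card_compl, card_union_of_disjoint hSR, Fintype.card_fin]
    omega
  · have hRc : S ∪ (S ∪ R)ᶜ = Rᶜ := by
      ext j
      have := @disjoint_left.mp hSR j
      simp only [mem_union, mem_compl]
      tauto
    rw [mul_assoc, sqMonomial_mul_of_disjoint (disjoint_of_subset_left subset_union_left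
      disjoint_compl_right), hRc, sqLinForm_pow_mul_sqMonomial_compl (hRUS.trans sdiff_subset),
      sqLinForm_pow_card, mul_assoc, sqMonomial_mul_compl]

lemma natCast_factorial_mul_sqMonomial_univ_ne_zero {p : ℕ} (hp : p.Prime) [CharP k p] {r : ℕ}
    (hr : r < p) : (r.factorial : SqAlg k n) * sqMonomial k univ ≠ 0 :=
  fun h => sqMonomial_ne_zero _
    (eq_zero_of_natCast_mul_eq_zero (natCast_factorial_ne_zero (k := k) hp hr) h)

lemma exists_ne_zero_sqLinForm_pow_mul_eq_zero {p : ℕ} (hp : p.Prime) [CharP k p] {i t : ℕ}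
    (ht : 1 ≤ t) (hpit : p ≤ i + t) (hin : i ≤ n) :
    ∃ v ∈ sqSpan k (univ : Finset (Fin n)) i, v ≠ 0 ∧ sqLinForm k univ ^ t * v = 0 := by
  have := hp.two_le
  obtain ⟨S, -, hS⟩ := exists_subset_card_eq (s := (univ : Finset (Fin n))) (n := i - (p - t))
    (by simp; omega)
  obtain ⟨T, -, hT⟩ := exists_sqLinForm_pow_mul_sqMonomial_mul_eq (k := k) (subset_univ S)
    (r := p - t) (by simp; omega)
  refine ⟨sqLinForm k univ ^ (p - t) * sqMonomial k S, ?_, fun h => ?_, ?_⟩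
  · simpa [hS, show p - t + (i - (p - t)) = i by omega] using
      sqLinForm_pow_mul_mem_sqSpan (sqMonomial_mem_sqSpan (k := k) (subset_univ S) rfl) (p - t)
  · rw [h, zero_mul] at hT
    exact natCast_factorial_mul_sqMonomial_univ_ne_zero hp (by omega) hT.symm
  · rw [← mul_assoc, ← pow_add, sqLinForm_pow_eq_zero hp _ (by omega), zero_mul]

lemma exists_forall_sqLinForm_pow_mul_ne {p : ℕ} (hp : p.Prime) [CharP k p] {i t : ℕ}
    (ht : 1 ≤ t) (hip : i + p ≤ n) (hit : i + t ≤ n) :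
    ∃ w ∈ sqSpan k (univ : Finset (Fin n)) (i + t),
      ∀ v ∈ sqSpan k univ i, sqLinForm k univ ^ t * v ≠ w := by
  have := hp.two_le
  obtain ⟨S, -, hS⟩ := exists_subset_card_eq (s := (univ : Finset (Fin n)))
    (n := n - i - t - (p - t)) (by simp; omega)
  obtain ⟨T, hT, hST⟩ := exists_sqLinForm_pow_mul_sqMonomial_mul_eq (k := k) (subset_univ S)
    (r := p - t) (by simp; omega)
  refine ⟨sqMonomial k T, sqMonomial_mem_sqSpan (subset_univ T) (by omega), fun v _ hv => ?_⟩
  apply natCast_factorial_mul_sqMonomial_univ_ne_zero (k := k) (n := n) hp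
    (show p - t < p by omega)
  rw [← hST, ← hv, mul_left_comm, ← mul_assoc, ← mul_assoc, ← pow_add,
    sqLinForm_pow_eq_zero hp _ (by omega), zero_mul, zero_mul]

lemma exists_mul_eq_smul_sqMonomial_univ (φ : Module.Dual k (SqAlg k n)) (c : ℕ) :
    ∃ y ∈ sqSpan k univ (n - c),
      ∀ x ∈ sqSpan k univ c, y * x = φ x • sqMonomial k univ := by
  refine ⟨∑ S ∈ powersetCard c univ, φ (sqMonomial k S) • sqMonomial k Sᶜ, ?_, ?_⟩
  · refine Submodule.sum_mem _ fun S hS => Submodule.smul_mem _ _ ?_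
    exact sqMonomial_mem_sqSpan (subset_univ _)
      (by rw [card_compl, Fintype.card_fin, (mem_powersetCard.mp hS).2])
  · refine LinearMap.eqOn_span' (f := LinearMap.mulLeft k _)
      (g := φ.smulRight (sqMonomial k univ)) ?_
    rintro _ ⟨T, ⟨-, hT⟩, rfl⟩
    simp only [LinearMap.mulLeft_apply, LinearMap.smulRight_apply, sum_mul, smul_mul_assoc]
    rw [sum_eq_single_of_mem T (mem_powersetCard.mpr ⟨subset_univ T, hT⟩)]
    · rw [mul_comm, sqMonomial_mul_compl]
    · intro S hS hST
      rw [mul_comm, sqMonomial_mul_compl_eq_zero (hT.trans (mem_powersetCard.mp hS).2.symm)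
        (Ne.symm hST), smul_zero]

/-- Multiplication by `z` is self-adjoint for the perfect pairing `A_j × A_(n-j) → A_n`, so a
linear form vanishing on `z A_i` comes from some `y ∈ A_(n-i-t)` with `z y = 0`. -/
theorem exists_mul_eq_of_injOn {z : SqAlg k n} {i t : ℕ} (hz : z ∈ sqSpan k univ t)
    (hit : i + t ≤ n) (hinj : ∀ y ∈ sqSpan k univ (n - i - t), z * y = 0 → y = 0)
    {w : SqAlg k n} (hw : w ∈ sqSpan k univ (i + t)) : ∃ v ∈ sqSpan k univ i, z * v = w := by
  by_contra! hne
  have hwW : w ∉ (sqSpan k univ i).map (LinearMap.mulLeft k z) := by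
    rintro ⟨v, hv, rfl⟩
    exact hne v hv rfl
  obtain ⟨φ, hφw, hφW⟩ := Submodule.exists_dual_map_eq_bot_of_notMem hwW inferInstance
  obtain ⟨y, hy, hyφ⟩ := exists_mul_eq_smul_sqMonomial_univ φ (i + t)
  have hφ0 : ∀ v ∈ sqSpan k univ i, φ (z * v) = 0 := fun v hv =>
    (Submodule.mem_bot k).mp (hφW ▸ Submodule.mem_map_of_mem (Submodule.mem_map_of_mem hv))
  have hzy : z * y = 0 := by
    refine eq_zero_of_forall_mul_sqMonomial_compl_eq_zero (c := n - i)
      (by simpa [show t + (n - (i + t)) = n - i by omega] using mul_mem_sqSpan hz hy)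
      fun S _ hS => ?_
    have hSc : sqMonomial k Sᶜ ∈ sqSpan k univ i :=
      sqMonomial_mem_sqSpan (subset_univ _) (by rw [card_compl, Fintype.card_fin]; omega)
    rw [mul_comm z, mul_assoc, hyφ _ (by simpa [add_comm] using mul_mem_sqSpan hz hSc),
      hφ0 _ hSc, zero_smul]
  have hyw := hyφ w hw
  rw [hinj y (by rwa [Nat.sub_sub]) hzy, zero_mul, eq_comm, smul_eq_zero] at hyw
  exact hyw.elim hφw (sqMonomial_ne_zero _)

end

/-- Let `k` be a field of prime characteristic `p`,
`A = k[x₁,…,xₙ]/(x₁²,…,xₙ²)` and `ℓ = x₁ + ⋯ + xₙ`.  For `i ≥ 0`, `t ≥ 1`, the map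
`·ℓ^t : A_i → A_{i+t}` has full rank iff `i + t > n` or `p > min{i+t, n-i}`. -/
theorem statement_5 {k : Type} [Field k] (p : ℕ) (hp : p.Prime) [CharP k p]
    (n : ℕ) (i t : ℕ) (ht : 1 ≤ t) :
    MulFullRank (sqComp k n i) (sqComp k n (i + t)) (sqSumVars k n ^ t) ↔
      (n < i + t ∨ min (i + t) (n - i) < p) := by
  simp only [MulFullRank, MulInjOn, MulSurjOnto, sqComp_eq_sqSpan, sqSumVars_eq_sqLinForm]
  constructor
  · rintro (hinj | hsurj) <;> by_contra! h
    · obtain ⟨v, hv, hv0, hv_ker⟩ :=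
        exists_ne_zero_sqLinForm_pow_mul_eq_zero (k := k) (n := n) (i := i) (t := t) hp ht
          (by omega) (by omega)
      exact hv0 (hinj v hv hv_ker)
    · obtain ⟨w, hw, hw_not⟩ :=
        exists_forall_sqLinForm_pow_mul_ne (k := k) (n := n) (i := i) (t := t) hp ht
          (by omega) (by omega)
      obtain ⟨v, hv, rfl⟩ := hsurj w hw
      exact hw_not v hv rfl
  · intro hcond
    rcases lt_or_ge n (i + t) with hlt | hle
    · refine Or.inr fun w hw => ⟨0, Submodule.zero_mem _, ?_⟩
      rw [sqSpan_eq_bot (by simpa using hlt), Submodule.mem_bot] at hw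
      rw [hw, mul_zero]
    · by_cases hi : i + t ≤ n - i
      · exact Or.inl fun v hv =>
          eq_zero_of_sqLinForm_pow_mul_eq_zero univ (by omega) (by simp; omega) hv
      · exact Or.inr fun w hw => exists_mul_eq_of_injOn (sqLinForm_pow_mem_sqSpan univ t) hle
          (fun y hy => eq_zero_of_sqLinForm_pow_mul_eq_zero univ (by omega) (by simp; omega) hy)
          hw
end

section
/- Let B be a standard graded artinian k-algebra, let d ≥ 1 and A = B ⊗_k k[x]/(x^d), let ℓ̄ ∈ B₁ be a linear form and ℓ = ℓ̄ + x ∈ A₁. Fix integers i, t with i ≥ d−1 and t ≥ d−1, and assume B_{i+t} ≠ 0. Assume the characteristic of k is either zero or a prime which does not divide the nonzero integer ∏_{p=1}^{d−1} det(C_{t,p,d}). Then the multiplication map ·ℓ^t : A_i → A_{i+t} has full rank if and only if the d maps ·ℓ̄^{2q+t−(d−1)} : B_{i−q} → B_{i+q+t−(d−1)}, for q = 0, 1, …, d−1, all have full rank for the same reason. -/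
/-!
Write `A_j = ⊕_{q<d} x^q B_{j-q}`. In these coordinates multiplication by `(ℓ̄ + x)^t` is the
matrix with entries `binom(t, r-q) ℓ̄^(t-r+q)`; reversing its rows gives `ℓ̄^(t-d+1) Λ H Λ`, where
`Λ = diag(ℓ̄^a)` and `H = (binom(t, d-1-a-c))` is the Hankel matrix whose leading principal minors
are the `det C_{t,p,d}`. These are nonzero integers, because a nonzero polynomial divisible by
`(X+1)^t` has more than `t` terms, and the hypothesis on the characteristic keeps them nonzero in
`k`. Hence `H = L U` with `L`, `U` invertible and triangular, and `Λ L U Λ = L' Λ² U'`, where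
`L' = Λ L Λ⁻¹` and `U' = Λ⁻¹ U Λ` have entries `c ℓ̄^e` and are invertible degree-preserving maps.
Such changes of coordinates preserve injectivity and surjectivity, so `·ℓ^t` is injective
(surjective) exactly when `diag(ℓ̄^(2q+t-d+1))` is, that is, componentwise.
-/

open scoped BigOperators

open Matrix

namespace Set

variable {α β α' β' : Type*} {f : α → β} {g : α' → β'} {e : α → α'} {e' : β → β'}
  {s : Set α} {t : Set β} {s' : Set α'} {t' : Set β'}

theorem injOn_iff_of_bijOn_comm (he : BijOn e s s') (he' : InjOn e' t) (hf : MapsTo f s t)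
    (h : EqOn (e' ∘ f) (g ∘ e) s) : InjOn f s ↔ InjOn g s' := by
  rw [← he.image_eq, ← he.injOn.comp_iff, ← h.injOn_iff]
  exact ⟨fun hi => he'.comp hi hf, InjOn.of_comp⟩

theorem surjOn_iff_of_bijOn_comm (he : BijOn e s s') (he' : BijOn e' t t') (hf : MapsTo f s t)
    (h : EqOn (e' ∘ f) (g ∘ e) s) : SurjOn f s t ↔ SurjOn g s' t' := by
  rw [← he.image_eq, ← surjOn_comp_iff, ← h.surjOn_iff]
  refine ⟨he'.surjOn.comp, fun hs y hy => ?_⟩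
  obtain ⟨z, hz, hzy⟩ := hs (he'.mapsTo hy)
  exact ⟨z, hz, he'.injOn (hf hz) hy hzy⟩

end Set

section MulFullRank

open Set

variable {k R : Type*} [Field k] [CommRing R] [Algebra k R]

lemma mulInjOn_iff_injOn (V : Submodule k R) (a : R) : MulInjOn V a ↔ InjOn (a * ·) V := by
  refine ⟨fun h v hv w hw hvw => sub_eq_zero.mp (h _ (sub_mem hv hw) ?_), fun h v hv hv0 =>
    h hv (zero_mem V) (by simpa using hv0)⟩
  simpa [mul_sub, sub_eq_zero] using hvw

lemma mulFullRank_iff_injOn_or_surjOn (V W : Submodule k R) (a : R) :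
    MulFullRank V W a ↔ InjOn (a * ·) V ∨ SurjOn (a * ·) V W := by
  rw [MulFullRank, mulInjOn_iff_injOn]
  rfl

end MulFullRank

section Determinants

open Finset Polynomial

namespace Polynomial

lemma card_support_le_card_support_X_pow_mul {R : Type*} [Semiring R] (Q : R[X]) (m : ℕ) :
    #Q.support ≤ #(X ^ m * Q).support :=
  card_le_card_of_injOn (· + m) (fun n hn => by simpa [coeff_X_pow_mul] using hn)
    (fun _ _ _ _ h => Nat.add_right_cancel h)

lemma card_support_derivative_lt {R : Type*} [Semiring R] [IsAddTorsionFree R] {Q : R[X]}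
    (hQ : Q.coeff 0 ≠ 0) : #(derivative Q).support < #Q.support := by
  have hsub : (derivative Q).support.map (addRightEmbedding 1) ⊆ Q.support.erase 0 := by
    intro n hn
    obtain ⟨j, hj, rfl⟩ := mem_map.mp hn
    exact mem_erase.mpr ⟨by simp, mem_support_derivative.mp hj⟩
  calc #(derivative Q).support = #((derivative Q).support.map (addRightEmbedding 1)) :=
        (card_map _).symm
    _ ≤ #(Q.support.erase 0) := card_le_card hsub
    _ < #Q.support := card_erase_lt_of_mem (mem_support_iff.mpr hQ)

theorem eq_zero_of_pow_dvd_of_card_support_le {K : Type*} [Field K] [CharZero K] {a : K}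
    (ha : a ≠ 0) {k : ℕ} {P : K[X]} (hdvd : (X - C a) ^ k ∣ P) (hcard : #P.support ≤ k) :
    P = 0 := by
  induction k generalizing P with
  | zero => exact support_eq_empty.mp (card_eq_zero.mp (Nat.le_zero.mp hcard))
  | succ k ih =>
    -- Dividing out the power of `X` and differentiating removes a term and a factor `X - a`.
    by_contra hP
    obtain ⟨Q, hPQ, hXQ⟩ := exists_eq_pow_rootMultiplicity_mul_and_not_dvd P hP 0
    have hQdvd : (X - C a) ^ (k + 1) ∣ Q :=
      ((isCoprime_X_sub_C_of_isUnit_sub (by simpa using ha)).pow).dvd_of_dvd_mul_left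
        (hPQ ▸ hdvd)
    have hQ0 : Q.coeff 0 ≠ 0 := by simpa [X_dvd_iff] using hXQ
    have hQcard : #Q.support ≤ #P.support := by
      rw [hPQ, map_zero, sub_zero]
      exact card_support_le_card_support_X_pow_mul Q _
    have hQ' : derivative Q = 0 :=
      ih (by simpa using pow_sub_one_dvd_derivative_of_pow_dvd hQdvd) <| by
        have := card_support_derivative_lt hQ0
        omega
    have hroot : Q.IsRoot a := dvd_iff_isRoot.mp ((dvd_pow_self _ k.succ_ne_zero).trans hQdvd)
    rw [eq_C_of_natDegree_eq_zero (derivative_eq_zero.mp hQ'), IsRoot, eval_C] at hroot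
    exact hQ0 hroot

end Polynomial

lemma coeff_sum_C_mul_X_pow_mul_X_add_one_pow {R : Type*} [Semiring R] {n : ℕ} (v : Fin n → R)
    (t m : ℕ) : ((∑ a, C (v a) * X ^ (a : ℕ)) * (X + 1) ^ t).coeff m =
      ∑ a, v a * (if (a : ℕ) ≤ m then (t.choose (m - a) : R) else 0) := by
  simp only [sum_mul, mul_assoc, finsetSum_coeff, coeff_C_mul, coeff_X_pow_mul',
    coeff_X_add_one_pow]

lemma binomZ_natCast_sub (t m n : ℕ) :
    binomZ t ((m : ℤ) - n) = if n ≤ m then (t.choose (m - n) : ℤ) else 0 := by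
  unfold binomZ
  split_ifs <;> first | omega | (congr; omega)

theorem det_Cmat_ne_zero {t p d : ℕ} (hp : p ≤ t) : (Cmat t p d).det ≠ 0 := by
  -- A vector `v` with `v ᵥ* C = 0` gives `R = (∑ v_a X^a) (X+1)^t` whose coefficients in degrees
  -- `p, …, d-1` are the entries of `v ᵥ* C`, so `R` has at most `t` nonzero coefficients.
  intro hdet
  obtain ⟨v, hv, hvC⟩ := exists_vecMul_eq_zero_iff.mpr
    (show ((Cmat t p d).map ((↑) : ℤ → ℚ)).det = 0 by rw [← Int.cast_det, hdet, Int.cast_zero])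
  have hpd : p < d := by
    by_contra h
    exact hv (funext fun a => absurd a.isLt (by omega))
  set Q : ℚ[X] := ∑ a, C (v a) * X ^ (a : ℕ)
  set R : ℚ[X] := Q * (X + 1) ^ t
  have hRcoeff := coeff_sum_C_mul_X_pow_mul_X_add_one_pow v t
  have hRwindow (m : ℕ) (hpm : p ≤ m) (hmd : m < d) : R.coeff m = 0 := by
    have hc := congrFun hvC ⟨d - 1 - m, by omega⟩
    simp only [vecMul, dotProduct, map_apply, Cmat, of_apply, Pi.zero_apply] at hc
    rw [hRcoeff]
    refine Eq.trans (sum_congr rfl fun a _ => ?_) hc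
    rw [show (d : ℤ) - 1 - (a : ℕ) - ((d - 1 - m : ℕ) : ℤ) = (m : ℤ) - (a : ℕ) by omega,
      binomZ_natCast_sub]
    split_ifs <;> simp
  have hRtop (m : ℕ) (hm : t + (d - p) ≤ m) : R.coeff m = 0 := by
    rw [hRcoeff]
    refine sum_eq_zero fun a _ => ?_
    rw [if_pos (by omega), Nat.choose_eq_zero_of_lt (by omega), Nat.cast_zero, mul_zero]
  have hsupp : R.support ⊆ range p ∪ Ico d (t + (d - p)) := by
    intro m hm
    simp only [mem_union, mem_range, mem_Ico]
    by_contra h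
    exact mem_support_iff.mp hm
      (if hmd : m < d then hRwindow m (by omega) hmd else hRtop m (by omega))
  have hR : R = 0 := by
    refine eq_zero_of_pow_dvd_of_card_support_le (a := -1) (k := t) (by norm_num) ?_ ?_
    · simp [R]
    · calc #R.support ≤ #(range p ∪ Ico d (t + (d - p))) := card_le_card hsupp
        _ ≤ p + (t + (d - p) - d) := by simpa using card_union_le (range p) (Ico d (t + (d - p)))
        _ ≤ t := by omega
  have hQ : Q = 0 := (mul_eq_zero.mp hR).resolve_right (pow_ne_zero _ (X_add_C_ne_zero 1))
  refine hv (funext fun a => ?_)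
  simpa [Q, finsetSum_coeff, coeff_X_pow, Fin.val_inj] using congrArg (coeff · a) hQ

lemma cast_det_Cmat_ne_zero {k : Type*} [Field k] {t p d : ℕ}
    (hchar : CharCond k (∏ p ∈ Icc 1 (d - 1), (Cmat t p d).det)) (ht : d - 1 ≤ t)
    (hp : p ∈ Icc 1 (d - 1)) : ((Cmat t p d).det : k) ≠ 0 := by
  rcases hchar with hk | ⟨r, -, hr, hndvd⟩
  · exact Int.cast_ne_zero.mpr (det_Cmat_ne_zero ((mem_Icc.mp hp).2.trans ht))
  · rw [Ne, CharP.intCast_eq_zero_iff k r]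
    exact fun h => hndvd (h.trans (dvd_prod_of_mem _ hp))

end Determinants

theorem Matrix.exists_isLowerTriangular_isUpperTriangular_mul_eq {K : Type*} [Field K] :
    ∀ {n : ℕ} (H : Matrix (Fin n) (Fin n) K),
      (∀ m (hm : m < n), (H.submatrix (Fin.castLE hm.le) (Fin.castLE hm.le)).det ≠ 0) →
      ∃ L U : Matrix (Fin n) (Fin n) K, L.IsLowerTriangular ∧ U.IsUpperTriangular ∧ L * U = H
  | 0, H, _ => ⟨1, 1, blockTriangular_one, blockTriangular_one, Subsingleton.elim _ _⟩
  | n + 1, H, hminor => by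
    let e : Fin n ⊕ Fin 1 ≃ Fin (n + 1) := finSumFinEquiv
    let H' := reindex e.symm e.symm H
    have hG (m : ℕ) (hm : m ≤ n) : H'.toBlocks₁₁.submatrix (Fin.castLE hm) (Fin.castLE hm) =
        H.submatrix (Fin.castLE (hm.trans n.le_succ)) (Fin.castLE (hm.trans n.le_succ)) :=
      rfl
    obtain ⟨L₀, U₀, hL₀, hU₀, hLU₀⟩ := exists_isLowerTriangular_isUpperTriangular_mul_eq
      H'.toBlocks₁₁ fun m hm => by rw [hG m hm.le]; exact hminor m (hm.trans n.lt_succ_self)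
    have hdet : IsUnit (L₀.det * U₀.det) := by
      rw [← det_mul, hLU₀, isUnit_iff_ne_zero]
      simpa [← hG n le_rfl] using hminor n n.lt_succ_self
    have hL₀u : IsUnit L₀.det := isUnit_of_mul_isUnit_left hdet
    have hU₀u : IsUnit U₀.det := isUnit_of_mul_isUnit_right hdet
    -- `H = [[G, b], [c, h]]` with `G = L₀ U₀` is
    -- `[[L₀, 0], [c U₀⁻¹, 1]] * [[U₀, L₀⁻¹ b], [0, h - c G⁻¹ b]]`.
    refine ⟨reindex e e (fromBlocks L₀ 0 (H'.toBlocks₂₁ * U₀⁻¹) 1),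
      reindex e e (fromBlocks U₀ (L₀⁻¹ * H'.toBlocks₁₂) 0
        (H'.toBlocks₂₂ - H'.toBlocks₂₁ * U₀⁻¹ * (L₀⁻¹ * H'.toBlocks₁₂))), ?_, ?_, ?_⟩
    · rw [IsLowerTriangular, blockTriangular_reindex_iff]
      rintro (i | i) (j | j) h <;> simp [e, Fin.lt_def, -Fin.val_fin_lt] at h ⊢
      · exact hL₀ (Fin.lt_def.mpr h)
      · omega
    · rw [IsUpperTriangular, blockTriangular_reindex_iff]
      rintro (i | i) (j | j) h <;> simp [e, Fin.lt_def, -Fin.val_fin_lt] at h ⊢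
      · exact hU₀ (Fin.lt_def.mpr h)
      · omega
    · rw [reindex_apply, reindex_apply, submatrix_mul_equiv, fromBlocks_multiply]
      simp only [Matrix.mul_zero, Matrix.zero_mul, Matrix.one_mul, add_zero, ← Matrix.mul_assoc,
        mul_nonsing_inv_cancel_left _ _ hL₀u, nonsing_inv_mul_cancel_right _ _ hU₀u, hLU₀,
        add_sub_cancel, fromBlocks_toBlocks]
      ext a b
      simp [H']

def binomHankel (t d : ℕ) : Matrix (Fin d) (Fin d) ℤ :=
  of fun a c => binomZ t ((d : ℤ) - 1 - (a : ℕ) - (c : ℕ))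

lemma det_submatrix_castLE_binomHankel (t : ℕ) {m d : ℕ} (hm : m ≤ d) :
    ((binomHankel t d).submatrix (Fin.castLE hm) (Fin.castLE hm)).det = (Cmat t (d - m) d).det := by
  rw [← det_submatrix_equiv_self (finCongr (by omega : m = d - (d - m)))]
  rfl

lemma isUnit_det_binomHankel (t d : ℕ) : IsUnit (binomHankel t d).det := by
  have hlower : ((binomHankel t d).submatrix Fin.revPerm id).IsLowerTriangular := by
    intro a c hac
    rw [OrderDual.toDual_lt_toDual, Fin.lt_def] at hac
    simp only [submatrix_apply, binomHankel, of_apply, Fin.revPerm_apply, Fin.val_rev, id, binomZ]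
    rw [if_neg (by omega)]
  have h := det_permute Fin.revPerm (binomHankel t d)
  rw [det_of_isLowerTriangular _ hlower, Finset.prod_eq_one fun a _ => ?_] at h
  · exact IsUnit.of_mul_eq_one_right _ h.symm
  simp only [submatrix_apply, binomHankel, of_apply, Fin.revPerm_apply, Fin.val_rev, id, binomZ]
  rw [if_pos (by omega)]
  simp

theorem exists_triangular_mul_eq_binomHankel {k : Type*} [Field k] {t d : ℕ}
    (hchar : CharCond k (∏ p ∈ Finset.Icc 1 (d - 1), (Cmat t p d).det)) (ht : d - 1 ≤ t) :
    ∃ L U : Matrix (Fin d) (Fin d) k, L.IsLowerTriangular ∧ U.IsUpperTriangular ∧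
      IsUnit L.det ∧ IsUnit U.det ∧ L * U = (binomHankel t d).map (↑) := by
  obtain ⟨L, U, hL, hU, hLU⟩ := exists_isLowerTriangular_isUpperTriangular_mul_eq
    ((binomHankel t d).map ((↑) : ℤ → k)) fun m hm => by
      rcases Nat.eq_zero_or_pos m with rfl | hm0
      · simp
      · rw [submatrix_map, ← Int.cast_det, det_submatrix_castLE_binomHankel]
        exact cast_det_Cmat_ne_zero hchar ht (Finset.mem_Icc.mpr ⟨by omega, by omega⟩)
  have h : IsUnit (L.det * U.det) := by
    rw [← det_mul, hLU, ← Int.cast_det]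
    exact (isUnit_det_binomHankel t d).map (Int.castRingHom k)
  exact ⟨L, U, hL, hU, isUnit_of_mul_isUnit_left h, isUnit_of_mul_isUnit_right h, hLU⟩

section GradedTuples

open Set

variable {ι k B : Type*} [CommRing k] [CommRing B] [Algebra k B] {𝒜 : ℤ → Submodule k B}

variable (𝒜) in
def gradedTuples (deg : ι → ℤ) : Set (ι → B) :=
  univ.pi fun a => (𝒜 (deg a) : Set B)

@[simp]
lemma mem_gradedTuples {deg : ι → ℤ} {f : ι → B} :
    f ∈ gradedTuples 𝒜 deg ↔ ∀ a, f a ∈ 𝒜 (deg a) := by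
  simp [gradedTuples]

lemma single_mem_gradedTuples [DecidableEq ι] {deg : ι → ℤ} (a : ι) {y : B}
    (hy : y ∈ 𝒜 (deg a)) : Pi.single a y ∈ gradedTuples 𝒜 deg := by
  refine mem_gradedTuples.mpr fun b => ?_
  rcases eq_or_ne b a with rfl | hb
  · simpa using hy
  · simp [hb]

lemma bijOn_comp_of_involutive {σ : ι → ι} (hσ : Function.Involutive σ) (deg : ι → ℤ) :
    BijOn (· ∘ σ) (gradedTuples 𝒜 deg) (gradedTuples 𝒜 (deg ∘ σ)) :=
  InvOn.bijOn (f' := (· ∘ σ)) ⟨fun f _ => by ext; simp [hσ _], fun f _ => by ext; simp [hσ _]⟩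
    (fun f hf => mem_gradedTuples.mpr fun a => mem_gradedTuples.mp hf (σ a))
    (fun f hf => mem_gradedTuples.mpr fun a => by simpa [hσ a] using mem_gradedTuples.mp hf (σ a))

variable [Fintype ι] [DecidableEq ι]

lemma injOn_diagonal_mulVec_iff (w : ι → B) (deg : ι → ℤ) :
    InjOn (diagonal w *ᵥ ·) (gradedTuples 𝒜 deg) ↔ ∀ a, InjOn (w a * ·) (𝒜 (deg a)) := by
  refine ⟨fun h a y hy z hz hyz => ?_, fun h f hf g hg hfg => funext fun a => ?_⟩
  · have := h (single_mem_gradedTuples a hy) (single_mem_gradedTuples a hz)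
      (by simpa only [diagonal_mulVec_single] using
        congrArg (Pi.single a) (show w a * y = w a * z from hyz))
    simpa using congrFun this a
  · exact h a (mem_gradedTuples.mp hf a) (mem_gradedTuples.mp hg a)
      (by simpa [mulVec_diagonal] using congrFun hfg a)

lemma surjOn_diagonal_mulVec_iff (w : ι → B) (src tgt : ι → ℤ) :
    SurjOn (diagonal w *ᵥ ·) (gradedTuples 𝒜 src) (gradedTuples 𝒜 tgt) ↔
      ∀ a, SurjOn (w a * ·) (𝒜 (src a)) (𝒜 (tgt a)) := by
  refine ⟨fun h a y hy => ?_, fun h g hg => ?_⟩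
  · obtain ⟨f, hf, hfy⟩ := h (single_mem_gradedTuples a hy)
    exact ⟨f a, mem_gradedTuples.mp hf a, by simpa [mulVec_diagonal] using congrFun hfy a⟩
  · choose f hf hfg using fun a => h a (mem_gradedTuples.mp hg a)
    exact ⟨f, mem_gradedTuples.mpr hf, funext fun a => by simpa [mulVec_diagonal] using hfg a⟩

end GradedTuples

section GradedMatrix

open Set

variable {ι k B : Type*} [CommRing k] [CommRing B] [Algebra k B] {𝒜 : ℤ → Submodule k B}

variable (𝒜) in
def Matrix.IsGraded (src tgt : ι → ℤ) (N : Matrix ι ι B) : Prop :=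
  ∀ a b, N a b ∈ 𝒜 (tgt a - src b)

variable [SetLike.GradedMonoid 𝒜]

lemma pow_mem_graded_of_mem_one {ℓ : B} (hℓ : ℓ ∈ 𝒜 1) (n : ℕ) : ℓ ^ n ∈ 𝒜 n := by
  simpa using SetLike.pow_mem_graded n hℓ

variable [Fintype ι] {src tgt : ι → ℤ} {N N' : Matrix ι ι B}

lemma Matrix.IsGraded.mapsTo_mulVec (hN : N.IsGraded 𝒜 src tgt) :
    MapsTo (N *ᵥ ·) (gradedTuples 𝒜 src) (gradedTuples 𝒜 tgt) := fun f hf =>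
  mem_gradedTuples.mpr fun a => Submodule.sum_mem _ fun b _ => by
    simpa using SetLike.mul_mem_graded (hN a b) (mem_gradedTuples.mp hf b)

lemma Matrix.IsGraded.bijOn_mulVec [DecidableEq ι] (hN : N.IsGraded 𝒜 src tgt)
    (hN' : N'.IsGraded 𝒜 tgt src) (h : N' * N = 1) (h' : N * N' = 1) :
    BijOn (N *ᵥ ·) (gradedTuples 𝒜 src) (gradedTuples 𝒜 tgt) :=
  InvOn.bijOn (f' := (N' *ᵥ ·)) ⟨fun f _ => by simp [mulVec_mulVec, h],
    fun g _ => by simp [mulVec_mulVec, h']⟩ hN.mapsTo_mulVec hN'.mapsTo_mulVec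

end GradedMatrix

section Twist

open Finset Set

variable {k B : Type*} [CommRing k] [CommRing B] [Algebra k B] {d : ℕ}

/-- The conjugate `Λ C Λ⁻¹` by `Λ = diagonal (ℓ ^ a)`, which has entries in `B` when `C` is lower
triangular. -/
def twist (ℓ : B) (C : Matrix (Fin d) (Fin d) k) : Matrix (Fin d) (Fin d) B :=
  of fun a b => C a b • ℓ ^ ((a : ℕ) - b)

variable (ℓ : B)

@[simp]
lemma twist_one : twist ℓ (1 : Matrix (Fin d) (Fin d) k) = 1 := by
  ext a b
  rcases eq_or_ne a b with rfl | hab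
  · simp [twist]
  · simp [twist, one_apply_ne hab]

lemma twist_mul {C C' : Matrix (Fin d) (Fin d) k} (hC : C.IsLowerTriangular)
    (hC' : C'.IsLowerTriangular) : twist ℓ (C * C') = twist ℓ C * twist ℓ C' := by
  ext a b
  simp only [twist, of_apply, mul_apply, sum_smul]
  refine sum_congr rfl fun c _ => ?_
  rcases lt_or_ge a c with hac | hca
  · simp [hC (OrderDual.toDual_lt_toDual.mpr hac)]
  rcases lt_or_ge c b with hcb | hbc
  · simp [hC' (OrderDual.toDual_lt_toDual.mpr hcb)]
  rw [smul_mul_smul_comm, ← pow_add]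
  congr 2
  omega

lemma twist_mul_diagonal_mul_twist_transpose {L U : Matrix (Fin d) (Fin d) k}
    (hL : L.IsLowerTriangular) (hU : U.IsUpperTriangular) (n : ℕ) :
    twist ℓ L * diagonal (fun c : Fin d => ℓ ^ (2 * (c : ℕ) + n)) * (twist ℓ Uᵀ)ᵀ =
      of fun a b => (L * U) a b • ℓ ^ (n + a + b) := by
  ext a b
  rw [mul_apply, of_apply, mul_apply, sum_smul]
  simp only [mul_diagonal, twist, of_apply, transpose_apply]
  refine sum_congr rfl fun c _ => ?_
  rcases lt_or_ge a c with hac | hca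
  · simp [hL (OrderDual.toDual_lt_toDual.mpr hac)]
  rcases lt_or_ge b c with hbc | hcb
  · simp [hU hbc]
  simp only [smul_mul_assoc, mul_smul_comm, smul_smul, ← pow_add, mul_comm (U c b)]
  congr 2
  omega

variable {𝒜 : ℤ → Submodule k B} [SetLike.GradedMonoid 𝒜] {ℓ}

lemma twist_mem (hℓ : ℓ ∈ 𝒜 1) {C : Matrix (Fin d) (Fin d) k} (hC : C.IsLowerTriangular)
    (a b : Fin d) : twist ℓ C a b ∈ 𝒜 ((a : ℤ) - b) := by
  rcases lt_or_ge a b with hab | hba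
  · simp [twist, hC (OrderDual.toDual_lt_toDual.mpr hab)]
  · have := pow_mem_graded_of_mem_one hℓ ((a : ℕ) - b)
    rw [Nat.cast_sub hba] at this
    exact Submodule.smul_mem _ _ this

lemma bijOn_twist_mulVec (hℓ : ℓ ∈ 𝒜 1) {C : Matrix (Fin d) (Fin d) k}
    (hC : C.IsLowerTriangular) (hdet : IsUnit C.det) {deg : Fin d → ℤ}
    (hdeg : ∀ a b, deg a - deg b = (a : ℤ) - b) :
    BijOn (twist ℓ C *ᵥ ·) (gradedTuples 𝒜 deg) (gradedTuples 𝒜 deg) := by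
  have : Invertible C := C.invertibleOfIsUnitDet hdet
  have hC' : C⁻¹.IsLowerTriangular := blockTriangular_inv_of_blockTriangular hC
  refine IsGraded.bijOn_mulVec (N' := twist ℓ C⁻¹) (fun a b => hdeg a b ▸ twist_mem hℓ hC a b)
    (fun a b => hdeg a b ▸ twist_mem hℓ hC' a b) ?_ ?_
  · rw [← twist_mul ℓ hC' hC, nonsing_inv_mul C hdet, twist_one]
  · rw [← twist_mul ℓ hC hC', mul_nonsing_inv C hdet, twist_one]

lemma bijOn_twist_transpose_mulVec (hℓ : ℓ ∈ 𝒜 1) {C : Matrix (Fin d) (Fin d) k}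
    (hC : C.IsLowerTriangular) (hdet : IsUnit C.det) {deg : Fin d → ℤ}
    (hdeg : ∀ a b, deg a - deg b = (b : ℤ) - a) :
    BijOn ((twist ℓ C)ᵀ *ᵥ ·) (gradedTuples 𝒜 deg) (gradedTuples 𝒜 deg) := by
  have : Invertible C := C.invertibleOfIsUnitDet hdet
  have hC' : C⁻¹.IsLowerTriangular := blockTriangular_inv_of_blockTriangular hC
  refine IsGraded.bijOn_mulVec (N' := (twist ℓ C⁻¹)ᵀ) (fun a b => hdeg a b ▸ twist_mem hℓ hC b a)
    (fun a b => hdeg a b ▸ twist_mem hℓ hC' b a) ?_ ?_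
  · rw [← transpose_mul, ← twist_mul ℓ hC hC', mul_nonsing_inv C hdet, twist_one, transpose_one]
  · rw [← transpose_mul, ← twist_mul ℓ hC' hC, nonsing_inv_mul C hdet, twist_one, transpose_one]

end Twist

section BinomialMatrix

open Finset

variable {B : Type*} [CommRing B] {d : ℕ}

/-- The matrix of multiplication by `(ℓ + x) ^ t` on `B[x]/(x^d)` in the basis
`1, x, …, x^(d-1)`. -/
def binomialMatrix (ℓ : B) (t d : ℕ) : Matrix (Fin d) (Fin d) B :=
  of fun r q => if q ≤ r then t.choose (r - q) • ℓ ^ (t - (r - q)) else 0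

lemma binomialMatrix_rev_apply {k : Type*} [CommRing k] [Algebra k B] (ℓ : B) {t : ℕ}
    (ht : d - 1 ≤ t) (a q : Fin d) :
    binomialMatrix ℓ t d a.rev q =
      ((binomHankel t d).map ((↑) : ℤ → k)) a q • ℓ ^ (t - (d - 1) + a + q) := by
  have harg : (d : ℤ) - 1 - (a : ℕ) - (q : ℕ) = ((d - 1 : ℕ) : ℤ) - ((a + q : ℕ) : ℤ) := by
    omega
  simp only [binomialMatrix, binomHankel, of_apply, map_apply, harg, binomZ_natCast_sub,
    Fin.le_def, Fin.val_rev]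
  split_ifs with h₁ h₂ h₂
  · rw [Int.cast_natCast, Nat.cast_smul_eq_nsmul]
    congr 2 <;> omega
  · omega
  · omega
  · simp

lemma sum_pow_mul_map_binomialMatrix {A : Type*} [CommRing A] (φ : B →+* A) {x : A}
    (hx : x ^ d = 0) (ℓ : B) (t : ℕ) (q : Fin d) :
    ∑ r : Fin d, x ^ (r : ℕ) * φ (binomialMatrix ℓ t d r q) = (φ ℓ + x) ^ t * x ^ (q : ℕ) := by
  set g : ℕ → A := fun j => t.choose j • (φ ℓ ^ (t - j) * x ^ ((q : ℕ) + j))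
  have hg_x (j : ℕ) (hj : j ≥ d - q) : g j = 0 := by
    simp [g, pow_eq_zero_of_le (by omega : d ≤ (q : ℕ) + j) hx]
  have hg_t (j : ℕ) (hj : j ≥ t + 1) : g j = 0 := by
    simp [g, Nat.choose_eq_zero_of_lt (by omega : t < j)]
  have lhs : ∑ r : Fin d, x ^ (r : ℕ) * φ (binomialMatrix ℓ t d r q) =
      ∑ j ∈ range (d - q), g j := calc
    _ = ∑ r : Fin d, if (q : ℕ) ≤ r then g (r - q) else 0 := sum_congr rfl fun r _ => by
      simp only [binomialMatrix, of_apply, Fin.le_def]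
      split_ifs with h
      · rw [map_nsmul, map_pow, mul_smul_comm, mul_comm]
        simp only [g, Nat.add_sub_cancel' h]
      · rw [map_zero, mul_zero]
    _ = ∑ r ∈ range d, if q ≤ r then g (r - q) else 0 :=
      Fin.sum_univ_eq_sum_range (fun r => if (q : ℕ) ≤ r then g (r - q) else 0) d
    _ = ∑ j ∈ range (d - q), g j := by
      rw [← sum_range_add_sum_Ico _ q.is_lt.le, sum_Ico_eq_sum_range,
        sum_eq_zero fun r hr => if_neg (by simpa using hr), zero_add]
      simp
  have rhs : (φ ℓ + x) ^ t * x ^ (q : ℕ) = ∑ j ∈ range (t + 1), g j := by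
    rw [add_comm, add_pow, sum_mul]
    refine sum_congr rfl fun j _ => ?_
    simp only [g, nsmul_eq_mul, pow_add]
    ring
  rw [lhs, rhs, ← eventually_constant_sum hg_x (Nat.le_add_right _ (t + 1)),
    ← eventually_constant_sum hg_t (Nat.le_add_left _ (d - q))]

lemma sum_pow_mul_map_binomialMatrix_mulVec {A : Type*} [CommRing A] (φ : B →+* A) {x : A}
    (hx : x ^ d = 0) (ℓ : B) (t : ℕ) (f : Fin d → B) :
    ∑ r : Fin d, x ^ (r : ℕ) * φ ((binomialMatrix ℓ t d *ᵥ f) r) =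
      (φ ℓ + x) ^ t * ∑ q : Fin d, x ^ (q : ℕ) * φ (f q) := by
  simp only [mulVec, dotProduct, map_sum, map_mul, mul_sum]
  rw [sum_comm]
  refine sum_congr rfl fun q _ => ?_
  rw [← mul_assoc, ← sum_pow_mul_map_binomialMatrix φ hx ℓ t q, sum_mul]
  exact sum_congr rfl fun r _ => (mul_assoc _ _ _).symm

lemma isGraded_binomialMatrix {k : Type*} [CommRing k] [Algebra k B] {𝒜 : ℤ → Submodule k B}
    [SetLike.GradedMonoid 𝒜] {ℓ : B} (hℓ : ℓ ∈ 𝒜 1) (t d : ℕ) (j : ℤ) :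
    (binomialMatrix ℓ t d).IsGraded 𝒜 (fun q : Fin d => j - (q : ℕ))
      (fun r => j + t - (r : ℕ)) := by
  intro r q
  simp only [binomialMatrix, of_apply, Fin.le_def]
  split_ifs with hqr
  · rcases le_or_gt ((r : ℕ) - q) t with hrt | htr
    · refine Submodule.smul_of_tower_mem _ _ ?_
      convert pow_mem_graded_of_mem_one hℓ (t - (r - q)) using 2
      omega
    · simp [Nat.choose_eq_zero_of_lt htr]
  · exact zero_mem _

end BinomialMatrix

section Extension

open Set

variable {k B : Type*} [Field k] [CommRing B] [Algebra k B] {𝒜 : ℤ → Submodule k B}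

lemma IsCIExtension.bijOn {A : Type*} [CommRing A] [Algebra k A] {ℬ : ℤ → Submodule k A}
    {φ : B →ₐ[k] A} {x : A} {d : ℕ} (hext : IsCIExtension 𝒜 ℬ φ x d) (j : ℤ) :
    BijOn (fun f : Fin d → B => ∑ q : Fin d, x ^ (q : ℕ) * φ (f q))
      (gradedTuples 𝒜 fun q : Fin d => j - (q : ℕ)) (ℬ j) := by
  refine ⟨fun f hf => hext.decomp_mem j f (mem_gradedTuples.mp hf), fun f hf g hg hfg => ?_,
    fun c hc => ?_⟩
  · have hfg' := hext.decomp_unique j (f - g)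
      (fun q => sub_mem (mem_gradedTuples.mp hf q) (mem_gradedTuples.mp hg q))
      (by simpa [mul_sub, Finset.sum_sub_distrib, sub_eq_zero] using hfg)
    exact funext fun q => sub_eq_zero.mp (hfg' q)
  · obtain ⟨f, hf, rfl⟩ := hext.decomp_exists j c hc
    exact ⟨f, mem_gradedTuples.mpr hf, rfl⟩

variable [SetLike.GradedMonoid 𝒜] {ℓ : B}

theorem IsCIExtension.mulFullRank_iff_binomialMatrix {A : Type*} [CommRing A] [Algebra k A]
    {ℬ : ℤ → Submodule k A} {φ : B →ₐ[k] A} {x : A} {d : ℕ} (hext : IsCIExtension 𝒜 ℬ φ x d)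
    (hℓ : ℓ ∈ 𝒜 1) (j : ℤ) (t : ℕ) :
    MulFullRank (ℬ j) (ℬ (j + t)) ((φ ℓ + x) ^ t) ↔
      InjOn (binomialMatrix ℓ t d *ᵥ ·) (gradedTuples 𝒜 fun q : Fin d => j - (q : ℕ)) ∨
      SurjOn (binomialMatrix ℓ t d *ᵥ ·) (gradedTuples 𝒜 fun q : Fin d => j - (q : ℕ))
        (gradedTuples 𝒜 fun r : Fin d => j + t - (r : ℕ)) := by
  have hM := (isGraded_binomialMatrix hℓ t d j).mapsTo_mulVec
  have hcomm : EqOn ((fun g : Fin d → B => ∑ r : Fin d, x ^ (r : ℕ) * φ (g r)) ∘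
      (binomialMatrix ℓ t d *ᵥ ·))
      (((φ ℓ + x) ^ t * ·) ∘ fun f => ∑ q : Fin d, x ^ (q : ℕ) * φ (f q))
      (gradedTuples 𝒜 fun q : Fin d => j - (q : ℕ)) :=
    fun f _ => sum_pow_mul_map_binomialMatrix_mulVec φ.toRingHom hext.x_pow ℓ t f
  rw [mulFullRank_iff_injOn_or_surjOn]
  exact or_congr (injOn_iff_of_bijOn_comm (hext.bijOn j) (hext.bijOn _).injOn hM hcomm).symm
    (surjOn_iff_of_bijOn_comm (hext.bijOn j) (hext.bijOn _) hM hcomm).symm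

end Extension

section Factorization

open Set

variable {k B : Type*} [CommRing k] [CommRing B] [Algebra k B] {ℓ : B} {t d : ℕ}
  {L U : Matrix (Fin d) (Fin d) k}

theorem binomialMatrix_submatrix_rev_eq (ht : d - 1 ≤ t) (hL : L.IsLowerTriangular)
    (hU : U.IsUpperTriangular) (hLU : L * U = (binomHankel t d).map (↑)) :
    (binomialMatrix ℓ t d).submatrix Fin.rev id =
      twist ℓ L *
        (diagonal (fun q : Fin d => ℓ ^ (2 * (q : ℕ) + t - (d - 1))) * (twist ℓ Uᵀ)ᵀ) := by
  -- With `Λ = diagonal (ℓ ^ a)` the left side is `ℓ^(t-d+1) Λ (L U) Λ`.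
  simp only [← Matrix.mul_assoc, Nat.add_sub_assoc ht,
    twist_mul_diagonal_mul_twist_transpose ℓ hL hU, hLU]
  ext a q
  exact binomialMatrix_rev_apply ℓ ht a q

variable {𝒜 : ℤ → Submodule k B} [SetLike.GradedMonoid 𝒜]

theorem binomialMatrix_injOn_or_surjOn_iff (hℓ : ℓ ∈ 𝒜 1) (ht : d - 1 ≤ t)
    (hL : L.IsLowerTriangular) (hU : U.IsUpperTriangular) (hLdet : IsUnit L.det)
    (hUdet : IsUnit U.det) (hLU : L * U = (binomHankel t d).map (↑)) (j : ℤ) :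
    InjOn (binomialMatrix ℓ t d *ᵥ ·) (gradedTuples 𝒜 fun q : Fin d => j - (q : ℕ)) ∨
      SurjOn (binomialMatrix ℓ t d *ᵥ ·) (gradedTuples 𝒜 fun q : Fin d => j - (q : ℕ))
        (gradedTuples 𝒜 fun r : Fin d => j + t - (r : ℕ)) ↔
    InjOn (diagonal (fun q : Fin d => ℓ ^ (2 * (q : ℕ) + t - (d - 1))) *ᵥ ·)
        (gradedTuples 𝒜 fun q : Fin d => j - (q : ℕ)) ∨
      SurjOn (diagonal (fun q : Fin d => ℓ ^ (2 * (q : ℕ) + t - (d - 1))) *ᵥ ·)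
        (gradedTuples 𝒜 fun q : Fin d => j - (q : ℕ))
        (gradedTuples 𝒜 fun r : Fin d => j + (r : ℕ) + t - ((d : ℤ) - 1)) := by
  have : Invertible L := L.invertibleOfIsUnitDet hLdet
  have hL' : L⁻¹.IsLowerTriangular := blockTriangular_inv_of_blockTriangular hL
  have hUbij := bijOn_twist_transpose_mulVec (𝒜 := 𝒜) hℓ hU.transpose (by rwa [det_transpose])
    (deg := fun q : Fin d => j - (q : ℕ)) fun a b => by ring
  have hLbij := bijOn_twist_mulVec (𝒜 := 𝒜) hℓ hL' (isUnit_nonsing_inv_det L hLdet)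
    (deg := fun r : Fin d => j + (r : ℕ) + t - ((d : ℤ) - 1)) fun a b => by ring
  have hrev : BijOn (· ∘ Fin.rev) (gradedTuples 𝒜 fun r : Fin d => j + t - (r : ℕ))
      (gradedTuples 𝒜 fun r : Fin d => j + (r : ℕ) + t - ((d : ℤ) - 1)) := by
    convert bijOn_comp_of_involutive Fin.rev_involutive _ using 2
    ext r
    simp only [Function.comp, Fin.val_rev]
    omega
  have hcomm : EqOn (((twist ℓ L⁻¹ *ᵥ ·) ∘ (· ∘ Fin.rev)) ∘ (binomialMatrix ℓ t d *ᵥ ·))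
      ((diagonal (fun q : Fin d => ℓ ^ (2 * (q : ℕ) + t - (d - 1))) *ᵥ ·) ∘
        ((twist ℓ Uᵀ)ᵀ *ᵥ ·)) (gradedTuples 𝒜 fun q : Fin d => j - (q : ℕ)) := fun f _ => by
    change twist ℓ L⁻¹ *ᵥ ((binomialMatrix ℓ t d).submatrix Fin.rev id *ᵥ f) = _
    rw [binomialMatrix_submatrix_rev_eq ht hL hU hLU, mulVec_mulVec, ← Matrix.mul_assoc,
      ← twist_mul ℓ hL' hL, nonsing_inv_mul L hLdet, twist_one, Matrix.one_mul, ← mulVec_mulVec]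
    rfl
  have hM := (isGraded_binomialMatrix hℓ t d j).mapsTo_mulVec
  exact or_congr (injOn_iff_of_bijOn_comm hUbij (hLbij.comp hrev).injOn hM hcomm)
    (surjOn_iff_of_bijOn_comm hUbij (hLbij.comp hrev) hM hcomm)

end Factorization

theorem statement_6_general {k B A : Type} [Field k]
    [CommRing B] [Algebra k B] [CommRing A] [Algebra k A]
    (𝒜 : ℤ → Submodule k B) (ℬ : ℤ → Submodule k A)
    (hB : IsStdGradedArtinian k B 𝒜)
    (d : ℕ) (φ : B →ₐ[k] A) (x : A)
    (hext : IsCIExtension 𝒜 ℬ φ x d)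
    (ℓbar : B) (hℓbar : ℓbar ∈ 𝒜 1)
    (i t : ℕ) (ht : d - 1 ≤ t)
    (hchar : CharCond k (∏ p ∈ Finset.Icc 1 (d - 1), (Cmat t p d).det)) :
    MulFullRank (ℬ (i : ℤ)) (ℬ ((i : ℤ) + t)) ((φ ℓbar + x) ^ t) ↔
      ((∀ q ∈ Finset.range d, MulInjOn (𝒜 ((i : ℤ) - q)) (ℓbar ^ (2 * q + t - (d - 1)))) ∨
       (∀ q ∈ Finset.range d,
          MulSurjOnto (𝒜 ((i : ℤ) - q)) (𝒜 ((i : ℤ) + q + t - ((d : ℤ) - 1)))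
            (ℓbar ^ (2 * q + t - (d - 1))))) := by
  have : SetLike.GradedMonoid 𝒜 := { one_mem := hB.one_mem, mul_mem := fun _ _ _ _ => hB.mul_mem }
  obtain ⟨L, U, hL, hU, hLdet, hUdet, hLU⟩ := exists_triangular_mul_eq_binomHankel hchar ht
  rw [hext.mulFullRank_iff_binomialMatrix hℓbar,
    binomialMatrix_injOn_or_surjOn_iff hℓbar ht hL hU hLdet hUdet hLU,
    injOn_diagonal_mulVec_iff, surjOn_diagonal_mulVec_iff]
  simp only [Fin.forall_iff, Finset.mem_range, mulInjOn_iff_injOn]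
  rfl

/-- Let `A = B ⊗ₖ k[x]/(x^d)` with `d ≥ 1`, `ℓ̄ ∈ B₁`, `ℓ = ℓ̄ + x`.
Fix `i, t ≥ d - 1` with `B_{i+t} ≠ 0` and assume the characteristic of `k` is zero or a
prime not dividing `∏_{p=1}^{d-1} det C_{t,p,d}`.  Then `·ℓ^t : A_i → A_{i+t}` has full
rank iff the `d` maps `·ℓ̄^{2q+t-(d-1)} : B_{i-q} → B_{i+q+t-(d-1)}`, `q = 0, …, d-1`,
all have full rank for the same reason. -/
theorem statement_6 {k B A : Type} [Field k]
    [CommRing B] [Algebra k B] [CommRing A] [Algebra k A]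
    (𝒜 : ℤ → Submodule k B) (ℬ : ℤ → Submodule k A)
    (hB : IsStdGradedArtinian k B 𝒜) (hA : IsStdGradedArtinian k A ℬ)
    (d : ℕ) (hd : 1 ≤ d) (φ : B →ₐ[k] A) (x : A)
    (hext : IsCIExtension 𝒜 ℬ φ x d)
    (ℓbar : B) (hℓbar : ℓbar ∈ 𝒜 1)
    (i t : ℕ) (hi : d - 1 ≤ i) (ht : d - 1 ≤ t)
    (hBit : 𝒜 ((i : ℤ) + t) ≠ ⊥)
    (hchar : CharCond k (∏ p ∈ Finset.Icc 1 (d - 1), (Cmat t p d).det)) :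
    MulFullRank (ℬ (i : ℤ)) (ℬ ((i : ℤ) + t)) ((φ ℓbar + x) ^ t) ↔
      ((∀ q ∈ Finset.range d, MulInjOn (𝒜 ((i : ℤ) - q)) (ℓbar ^ (2 * q + t - (d - 1)))) ∨
       (∀ q ∈ Finset.range d,
          MulSurjOnto (𝒜 ((i : ℤ) - q)) (𝒜 ((i : ℤ) + q + t - ((d : ℤ) - 1)))
            (ℓbar ^ (2 * q + t - (d - 1))))) :=
  statement_6_general 𝒜 ℬ hB d φ x hext ℓbar hℓbar i t ht hchar
end

section
/- Let k be an infinite field, let B be a standard graded artinian k-algebra, let d ≥ 1 and A = B ⊗_k k[x]/(x^d). Then A has the weak Lefschetz property if and only if there exists a linear form ℓ ∈ B₁ such that the multiplication map ·ℓ^d : B_i → B_{i+d} has full rank for every i ≥ 0. -/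
/-!
Every element of `A_j` is uniquely `∑_{q<d} x^q φ(f_q)` with `f_q ∈ B_{j-q}`, and every linear form
of `A` is `φ ℓ₀ + c x` with `ℓ₀ ∈ B₁` and `c ∈ k`.

If `c ≠ 0`, rescaling gives `L = x - φ ℓ`. As `x^d = 0`, the geometric sum
`G = ∑_q x^q ℓ^(d-1-q)` satisfies `G L = -ℓ^d`, and reading off coefficients of `x^(d-1)` shows that
`·L : A_i → A_{i+1}` is injective (surjective) exactly when `·ℓ^d : B_{i+1-d} → B_{i+1}` is.
For injectivity, `x a = φ(ℓ) a` on the kernel of `L` kills the coefficients of `a` from the top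
down; for surjectivity, `x^(m+1) φ g ≡ x^m φ(ℓ g)` modulo the image of `L`.

If `c = 0`, `·φ ℓ₀` acts on each summand `x^q B_{i-q}` separately, so full rank on `A_{j+d-1}`
gives `·ℓ₀` of the same kind on `B_j, …, B_{j+d-1}`, hence full rank of `·ℓ₀^d : B_j → B_{j+d}`.
-/

open scoped BigOperators

section MulRank

variable {k R : Type*} [Field k] [CommRing R] [Algebra k R] {U V W : Submodule k R} {a b : R}

theorem MulInjOn.mul (hb : MulInjOn W b) (ha : MulInjOn V a) (hV : ∀ v ∈ V, a * v ∈ W) :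
    MulInjOn V (b * a) :=
  fun v hv h => ha v hv (hb _ (hV v hv) (by rwa [← mul_assoc]))

theorem MulSurjOnto.mul (hb : MulSurjOnto W U b) (ha : MulSurjOnto V W a) :
    MulSurjOnto V U (b * a) := by
  intro u hu
  obtain ⟨w, hw, rfl⟩ := hb u hu
  obtain ⟨v, hv, rfl⟩ := ha w hw
  exact ⟨v, hv, mul_assoc b a v⟩

theorem MulInjOn.smul (h : MulInjOn V a) {c : k} (hc : c ≠ 0) : MulInjOn V (c • a) :=
  fun v hv hcv => h v hv <| (smul_eq_zero.mp (by rwa [smul_mul_assoc] at hcv)).resolve_left hc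

theorem MulSurjOnto.smul (h : MulSurjOnto V W a) {c : k} (hc : c ≠ 0) :
    MulSurjOnto V W (c • a) := by
  intro w hw
  obtain ⟨v, hv, rfl⟩ := h w hw
  exact ⟨c⁻¹ • v, V.smul_mem _ hv, by rw [smul_mul_smul_comm, mul_inv_cancel₀ hc, one_smul]⟩

theorem MulFullRank.smul (h : MulFullRank V W a) {c : k} (hc : c ≠ 0) :
    MulFullRank V W (c • a) :=
  h.imp (·.smul hc) (·.smul hc)

end MulRank

section Graded

variable {k B : Type*} [Field k] [CommRing B] [Algebra k B] {𝒜 : ℤ → Submodule k B}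

theorem IsStdGradedArtinian.gradedMonoid (hB : IsStdGradedArtinian k B 𝒜) :
    SetLike.GradedMonoid 𝒜 :=
  { one_mem := hB.one_mem, mul_mem := fun _ _ _ _ => hB.mul_mem }

theorem mulSurjOnto_pow {ℓ : B} {j : ℤ} {t : ℕ}
    (h : ∀ m < t, MulSurjOnto (𝒜 (j + m)) (𝒜 (j + m + 1)) ℓ) :
    MulSurjOnto (𝒜 j) (𝒜 (j + t)) (ℓ ^ t) := by
  induction t with
  | zero => exact fun w hw => ⟨w, by simpa using hw, by rw [pow_zero, one_mul]⟩
  | succ t ih =>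
    rw [pow_succ', Nat.cast_succ, ← add_assoc]
    exact (h t t.lt_add_one).mul (ih fun m hm => h m (by omega))

variable [SetLike.GradedMonoid 𝒜] {ℓ v : B}

theorem pow_mul_mem_of_mem_one (hℓ : ℓ ∈ 𝒜 1) {j : ℤ} (hv : v ∈ 𝒜 j) {m : ℕ} {i : ℤ}
    (hi : m + j = i) : ℓ ^ m * v ∈ 𝒜 i := by
  have := SetLike.mul_mem_graded (SetLike.pow_mem_graded m hℓ) hv
  rwa [nsmul_one, hi] at this

theorem mulInjOn_pow (hℓ : ℓ ∈ 𝒜 1) {j : ℤ} {t : ℕ}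
    (h : ∀ m < t, MulInjOn (𝒜 (j + m)) ℓ) : MulInjOn (𝒜 j) (ℓ ^ t) := by
  induction t with
  | zero => exact fun v _ hv => by rwa [pow_zero, one_mul] at hv
  | succ t ih =>
    rw [pow_succ']
    exact (h t t.lt_add_one).mul (ih fun m hm => h m (by omega))
      fun v hv => pow_mul_mem_of_mem_one hℓ hv (add_comm _ _)

end Graded

section CIExtension

variable {k B A : Type*} [Field k] [CommRing B] [Algebra k B] [CommRing A] [Algebra k A]

def xSum (φ : B →ₐ[k] A) (x : A) {d : ℕ} (f : Fin d → B) : A :=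
  ∑ q : Fin d, x ^ (q : ℕ) * φ (f q)

variable (φ : B →ₐ[k] A) (x : A) {d n : ℕ}

theorem xSum_mul_map (f : Fin d → B) (b : B) :
    xSum φ x f * φ b = xSum φ x fun q => f q * b := by
  simp only [xSum, Finset.sum_mul, map_mul, mul_assoc]

theorem xSum_single (q : Fin d) (v : B) : xSum φ x (Pi.single q v) = x ^ (q : ℕ) * φ v := by
  simp [xSum, Pi.single_apply, apply_ite φ, mul_ite]

theorem x_mul_xSum (hx : x ^ (n + 1) = 0) (f : Fin (n + 1) → B) :
    x * xSum φ x f = xSum φ x (Fin.cons 0 (Fin.init f)) := by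
  rw [xSum, xSum, Finset.mul_sum, Fin.sum_univ_castSucc, Fin.sum_univ_succ]
  simp only [Fin.cons_zero, Fin.cons_succ, Fin.init, map_zero, mul_zero, zero_add, Fin.val_castSucc,
    Fin.val_succ, Fin.val_last, ← mul_assoc, ← pow_succ', hx, zero_mul, add_zero]

theorem xSum_pow_mul_sub_map (hx : x ^ (n + 1) = 0) (ℓ : B) :
    xSum φ x (fun q : Fin (n + 1) => ℓ ^ (n - q)) * (x - φ ℓ) = -φ (ℓ ^ (n + 1)) := by
  have := geom_sum₂_mul x (φ ℓ) (n + 1)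
  rw [← Fin.sum_univ_eq_sum_range (fun q => x ^ q * φ ℓ ^ (n + 1 - 1 - q)), hx, zero_sub] at this
  simpa [xSum] using this

theorem single_apply_mem {𝒜 : ℤ → Submodule k B} {j : ℤ} {v : B} {q : Fin d}
    (hv : v ∈ 𝒜 (j - (q : ℕ))) (r : Fin d) :
    (Pi.single q v : Fin d → B) r ∈ 𝒜 (j - (r : ℕ)) := by
  rcases eq_or_ne r q with rfl | hr
  · simpa using hv
  · simp [hr]

end CIExtension

namespace IsCIExtension

variable {k B A : Type*} [Field k] [CommRing B] [Algebra k B] [CommRing A] [Algebra k A]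
  {𝒜 : ℤ → Submodule k B} {ℬ : ℤ → Submodule k A} {φ : B →ₐ[k] A} {x : A}

section

variable {d : ℕ} {i j : ℤ} {ℓ v : B} (hext : IsCIExtension 𝒜 ℬ φ x d)
include hext

theorem xSum_mem {f : Fin d → B} (hf : ∀ q : Fin d, f q ∈ 𝒜 (j - (q : ℕ))) :
    xSum φ x f ∈ ℬ j :=
  hext.decomp_mem j f hf

theorem exists_eq_xSum {a : A} (ha : a ∈ ℬ j) :
    ∃ f : Fin d → B, (∀ q : Fin d, f q ∈ 𝒜 (j - (q : ℕ))) ∧ a = xSum φ x f :=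
  hext.decomp_exists j a ha

theorem eq_zero_of_xSum_eq_zero {f : Fin d → B} (hf : ∀ q : Fin d, f q ∈ 𝒜 (j - (q : ℕ)))
    (h : xSum φ x f = 0) : f = 0 :=
  funext (hext.decomp_unique j f hf h)

theorem xSum_inj {f g : Fin d → B} (hf : ∀ q : Fin d, f q ∈ 𝒜 (j - (q : ℕ)))
    (hg : ∀ q : Fin d, g q ∈ 𝒜 (j - (q : ℕ))) (h : xSum φ x f = xSum φ x g) : f = g := by
  funext q
  refine sub_eq_zero.mp <| congrFun (hext.eq_zero_of_xSum_eq_zero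
    (fun q => sub_mem (hf q) (hg q)) ?_) q
  simpa [xSum, mul_sub, Finset.sum_sub_distrib, sub_eq_zero] using h

theorem pow_mul_map_mem {m : ℕ} (hv : v ∈ 𝒜 (j - m)) : x ^ m * φ v ∈ ℬ j := by
  by_cases hm : m < d
  · rw [← xSum_single φ x (⟨m, hm⟩ : Fin d)]
    exact hext.xSum_mem (single_apply_mem hv)
  · rw [pow_eq_zero_of_le (not_lt.mp hm) hext.x_pow, zero_mul]
    exact zero_mem _

theorem mulInjOn_of_mulInjOn_map (h : MulInjOn (ℬ i) (φ ℓ)) {m : ℕ} (hm : m < d) :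
    MulInjOn (𝒜 (i - m)) ℓ := by
  intro v hv hℓv
  have hxv : x ^ m * φ v = 0 :=
    h _ (hext.pow_mul_map_mem hv) (by rw [mul_left_comm, ← map_mul, hℓv, map_zero, mul_zero])
  simpa using congrFun (hext.eq_zero_of_xSum_eq_zero (single_apply_mem (q := ⟨m, hm⟩) hv)
    (by rwa [xSum_single])) ⟨m, hm⟩

theorem mulSurjOnto_of_mulSurjOnto_map [SetLike.GradedMonoid 𝒜] (hℓ : ℓ ∈ 𝒜 1)
    (h : MulSurjOnto (ℬ i) (ℬ (i + 1)) (φ ℓ)) {m : ℕ} (hm : m < d) :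
    MulSurjOnto (𝒜 (i - m)) (𝒜 (i + 1 - m)) ℓ := by
  intro w hw
  obtain ⟨a, ha, haw⟩ := h _ (hext.pow_mul_map_mem hw)
  obtain ⟨f, hf, rfl⟩ := hext.exists_eq_xSum ha
  rw [mul_comm, xSum_mul_map, ← xSum_single φ x (⟨m, hm⟩ : Fin d)] at haw
  have hfw := congrFun (hext.xSum_inj (j := i + 1)
    (fun q => by simpa [mul_comm] using pow_mul_mem_of_mem_one (m := 1) hℓ (hf q) (by ring))
    (single_apply_mem hw) haw) ⟨m, hm⟩
  exact ⟨f ⟨m, hm⟩, hf ⟨m, hm⟩, by simpa [mul_comm] using hfw⟩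

end

section

variable {n : ℕ} {i : ℤ} {ℓ : B} (hext : IsCIExtension 𝒜 ℬ φ x (n + 1))
include hext

theorem exists_eq_map_add_smul (hB : IsStdGradedArtinian k B 𝒜) {L : A} (hL : L ∈ ℬ 1) :
    ∃ ℓ ∈ 𝒜 1, ∃ c : k, L = φ ℓ + c • x := by
  obtain ⟨f, hf, rfl⟩ := hext.exists_eq_xSum hL
  have hhigher : ∀ q : Fin n, x ^ (q.succ : ℕ) * φ (f q.succ) ∈ k ∙ x := by
    intro q
    have hq := hf q.succ
    rcases Nat.eq_zero_or_pos q with hq0 | hqpos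
    · rw [Fin.val_succ, hq0] at hq ⊢
      rw [Nat.cast_one, sub_self, hB.zero_spanOne] at hq
      obtain ⟨c, hc⟩ := Submodule.mem_span_singleton.mp hq
      rw [← hc, map_smul, map_one, pow_one, mul_smul_comm, mul_one]
      exact Submodule.smul_mem _ _ (Submodule.mem_span_singleton_self x)
    · rw [hB.neg_bot _ (by simp; omega), Submodule.mem_bot] at hq
      simp [hq]
  obtain ⟨c, hc⟩ :=
    Submodule.mem_span_singleton.mp (sum_mem (t := Finset.univ) fun q _ => hhigher q)
  exact ⟨f 0, by simpa using hf 0, c, by rw [xSum, Fin.sum_univ_succ, hc]; simp⟩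

variable [SetLike.GradedMonoid 𝒜]

theorem xSum_pow_mul_mem (hℓ : ℓ ∈ 𝒜 1) {v : B} (hv : v ∈ 𝒜 (i - n)) :
    xSum φ x (fun q : Fin (n + 1) => ℓ ^ (n - q) * v) ∈ ℬ i :=
  hext.xSum_mem fun q => pow_mul_mem_of_mem_one hℓ hv (by have := q.2; omega)

theorem mulInjOn_sub_map_of_pow (hℓ : ℓ ∈ 𝒜 1) (h : MulInjOn (𝒜 (i - n)) (ℓ ^ (n + 1))) :
    MulInjOn (ℬ i) (x - φ ℓ) := by
  intro a ha hLa
  obtain ⟨f, hf, rfl⟩ := hext.exists_eq_xSum ha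
  have hlast : f (Fin.last n) = 0 := by
    have hℓf : xSum φ x (fun q => f q * ℓ ^ (n + 1)) = 0 := by
      rw [← xSum_mul_map, ← neg_eq_zero, ← mul_neg, ← xSum_pow_mul_sub_map φ x hext.x_pow,
        mul_comm, mul_assoc, hLa, mul_zero]
    refine h _ (by simpa using hf (Fin.last n)) ?_
    rw [mul_comm]
    exact congrFun (hext.eq_zero_of_xSum_eq_zero (j := i + (n + 1))
      (fun q => by simpa [mul_comm] using pow_mul_mem_of_mem_one hℓ (hf q) (by push_cast; ring))
      hℓf) _
  have hstep : ∀ q : Fin n, f q.castSucc = ℓ * f q.succ := by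
    have hshift : xSum φ x (Fin.cons 0 (Fin.init f)) = xSum φ x (fun q => f q * ℓ) := by
      rw [← x_mul_xSum φ x hext.x_pow, ← xSum_mul_map]
      linear_combination hLa
    intro q
    have hcons : ∀ q : Fin (n + 1), (Fin.cons 0 (Fin.init f) : Fin (n + 1) → B) q ∈
        𝒜 (i + 1 - (q : ℕ)) :=
      Fin.cases (by simp) fun q => by simpa [Fin.init, add_sub_add_right_eq_sub] using hf q.castSucc
    simpa [Fin.init, mul_comm] using congrFun (hext.xSum_inj hcons
      (fun q => by simpa [mul_comm] using pow_mul_mem_of_mem_one (m := 1) hℓ (hf q) (by ring))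
      hshift) q.succ
  have hf0 : f = 0 :=
    funext <| Fin.reverseInduction (motive := fun q => f q = 0) hlast fun q hq => by
      rw [hstep, hq, mul_zero]
  simp [hf0, xSum]

theorem mulInjOn_pow_of_sub_map (hℓ : ℓ ∈ 𝒜 1) (h : MulInjOn (ℬ i) (x - φ ℓ)) :
    MulInjOn (𝒜 (i - n)) (ℓ ^ (n + 1)) := by
  intro v hv hℓv
  have hzero : (x - φ ℓ) * xSum φ x (fun q : Fin (n + 1) => ℓ ^ (n - q) * v) = 0 := by
    have hℓv' : φ (ℓ ^ (n + 1)) * φ v = 0 := by rw [← map_mul, hℓv, map_zero]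
    rw [← xSum_mul_map]
    linear_combination φ v * xSum_pow_mul_sub_map φ x hext.x_pow ℓ - hℓv'
  simpa using congrFun (hext.eq_zero_of_xSum_eq_zero (j := i)
    (fun q => pow_mul_mem_of_mem_one hℓ hv (by have := q.2; omega))
    (h _ (hext.xSum_pow_mul_mem hℓ hv) hzero)) (Fin.last n)

theorem mulSurjOnto_pow_of_sub_map (hℓ : ℓ ∈ 𝒜 1)
    (h : MulSurjOnto (ℬ i) (ℬ (i + 1)) (x - φ ℓ)) :
    MulSurjOnto (𝒜 (i - n)) (𝒜 (i + 1)) (ℓ ^ (n + 1)) := by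
  intro w hw
  obtain ⟨a, ha, haw⟩ := h (φ w) (hext.map_mem _ w hw)
  obtain ⟨f, hf, rfl⟩ := hext.exists_eq_xSum ha
  have hcoeff : xSum φ x (fun q : Fin (n + 1) => ℓ ^ (n - q) * w) =
      xSum φ x (fun q => f q * -ℓ ^ (n + 1)) := by
    rw [← xSum_mul_map, ← xSum_mul_map, ← haw, ← mul_assoc, xSum_pow_mul_sub_map φ x hext.x_pow,
      map_neg, neg_mul, mul_neg, mul_comm]
  have hw' : ∀ q : Fin (n + 1), ℓ ^ (n - q) * w ∈ 𝒜 (i + 1 + n - (q : ℕ)) :=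
    fun q => pow_mul_mem_of_mem_one hℓ hw (by have := q.2; omega)
  have hf' : ∀ q : Fin (n + 1), f q * -ℓ ^ (n + 1) ∈ 𝒜 (i + 1 + n - (q : ℕ)) := fun q => by
    simpa [mul_comm] using neg_mem (pow_mul_mem_of_mem_one hℓ (hf q) (by push_cast; ring))
  have := congrFun (hext.xSum_inj hw' hf' hcoeff) (Fin.last n)
  exact ⟨-f (Fin.last n), neg_mem (by simpa using hf (Fin.last n)),
    by simpa [mul_comm] using this.symm⟩

theorem mulSurjOnto_sub_map_of_pow (hℓ : ℓ ∈ 𝒜 1)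
    (h : MulSurjOnto (𝒜 (i - n)) (𝒜 (i + 1)) (ℓ ^ (n + 1))) :
    MulSurjOnto (ℬ i) (ℬ (i + 1)) (x - φ ℓ) := by
  set S := (ℬ i).map (LinearMap.mulLeft k (x - φ ℓ))
  have hS : ∀ m : ℕ, ∀ g ∈ 𝒜 (i + 1 - m), x ^ m * φ g ∈ S := by
    intro m
    induction m with
    | zero =>
      intro g hg
      obtain ⟨v, hv, rfl⟩ := h g (by simpa using hg)
      refine ⟨-xSum φ x (fun q : Fin (n + 1) => ℓ ^ (n - q) * v),
        neg_mem (hext.xSum_pow_mul_mem hℓ hv), ?_⟩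
      rw [LinearMap.mulLeft_apply, ← xSum_mul_map, map_mul]
      linear_combination -φ v * xSum_pow_mul_sub_map φ x hext.x_pow ℓ
    | succ m ih =>
      intro g hg
      have hsplit : x ^ (m + 1) * φ g = (x - φ ℓ) * (x ^ m * φ g) + x ^ m * φ (ℓ * g) := by
        rw [map_mul]; ring
      rw [hsplit]
      exact add_mem ⟨_, hext.pow_mul_map_mem (by convert hg using 2; push_cast; ring), rfl⟩
        (ih _ (by simpa [add_comm] using
          pow_mul_mem_of_mem_one (m := 1) hℓ hg (by push_cast; ring)))
  intro c hc
  obtain ⟨g, hg, rfl⟩ := hext.exists_eq_xSum hc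
  exact S.sum_mem fun q _ => hS q (g q) (hg q)

theorem mulFullRank_sub_map_iff (hℓ : ℓ ∈ 𝒜 1) :
    MulFullRank (ℬ i) (ℬ (i + 1)) (x - φ ℓ) ↔ MulFullRank (𝒜 (i - n)) (𝒜 (i + 1)) (ℓ ^ (n + 1)) :=
  or_congr ⟨hext.mulInjOn_pow_of_sub_map hℓ, hext.mulInjOn_sub_map_of_pow hℓ⟩
    ⟨hext.mulSurjOnto_pow_of_sub_map hℓ, hext.mulSurjOnto_sub_map_of_pow hℓ⟩

theorem mulFullRank_pow_of_map (hℓ : ℓ ∈ 𝒜 1) (h : MulFullRank (ℬ i) (ℬ (i + 1)) (φ ℓ)) :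
    MulFullRank (𝒜 (i - n)) (𝒜 (i + 1)) (ℓ ^ (n + 1)) := by
  refine h.imp (fun hinj => mulInjOn_pow hℓ fun m hm => ?_) fun hsurj => ?_
  · have := hext.mulInjOn_of_mulInjOn_map hinj (m := n - m) (by omega)
    rwa [show i - ((n - m : ℕ) : ℤ) = i - n + m by omega] at this
  · have := mulSurjOnto_pow (𝒜 := 𝒜) (j := i - n) (t := n + 1) fun m hm => by
      have := hext.mulSurjOnto_of_mulSurjOnto_map hℓ hsurj (m := n - m) (by omega)
      rwa [show i - ((n - m : ℕ) : ℤ) = i - n + m by omega,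
        show i + 1 - ((n - m : ℕ) : ℤ) = i - n + m + 1 by omega] at this
    rwa [show i - n + ((n + 1 : ℕ) : ℤ) = i + 1 by push_cast; ring] at this

end

end IsCIExtension

theorem statement_12_general {k B A : Type} [Field k]
    [CommRing B] [Algebra k B] [CommRing A] [Algebra k A]
    (𝒜 : ℤ → Submodule k B) (ℬ : ℤ → Submodule k A)
    (hB : IsStdGradedArtinian k B 𝒜)
    (d : ℕ) (hd : 1 ≤ d) (φ : B →ₐ[k] A) (x : A)
    (hext : IsCIExtension 𝒜 ℬ φ x d) :
    HasWLP ℬ ↔ ∃ ℓ ∈ 𝒜 1, ∀ i : ℤ, 0 ≤ i → MulFullRank (𝒜 i) (𝒜 (i + d)) (ℓ ^ d) := by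
  have := hB.gradedMonoid
  obtain ⟨n, rfl⟩ : ∃ n, d = n + 1 := ⟨d - 1, by omega⟩
  have hidx (j : ℤ) : j + n - n = j ∧ j + n + 1 = j + ((n + 1 : ℕ) : ℤ) := by push_cast; omega
  constructor
  · rintro ⟨L, hL, hWLP⟩
    obtain ⟨ℓ₀, hℓ₀, c, rfl⟩ := hext.exists_eq_map_add_smul hB hL
    rcases eq_or_ne c 0 with rfl | hc
    · refine ⟨ℓ₀, hℓ₀, fun j hj => ?_⟩
      have := hext.mulFullRank_pow_of_map hℓ₀ (by simpa using hWLP (j + n) (by omega))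
      rwa [(hidx j).1, (hidx j).2] at this
    · have hℓ : -c⁻¹ • ℓ₀ ∈ 𝒜 1 := Submodule.smul_mem _ _ hℓ₀
      have hnormal : c⁻¹ • (φ ℓ₀ + c • x) = x - φ (-c⁻¹ • ℓ₀) := by
        rw [smul_add, smul_smul, inv_mul_cancel₀ hc, one_smul, map_smul, neg_smul, sub_neg_eq_add,
          add_comm]
      refine ⟨-c⁻¹ • ℓ₀, hℓ, fun j hj => ?_⟩
      have := (hWLP (j + n) (by omega)).smul (inv_ne_zero hc)
      rwa [hnormal, hext.mulFullRank_sub_map_iff hℓ, (hidx j).1, (hidx j).2] at this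
  · rintro ⟨ℓ, hℓ, hfull⟩
    refine ⟨x - φ ℓ, sub_mem hext.x_mem (hext.map_mem 1 ℓ hℓ), fun i _ => ?_⟩
    rw [hext.mulFullRank_sub_map_iff hℓ]
    rcases lt_or_ge (i - n) 0 with hneg | hnonneg
    · exact Or.inl fun v hv _ => by rwa [hB.neg_bot _ hneg, Submodule.mem_bot] at hv
    · have := hfull (i - n) hnonneg
      rwa [show i - n + ((n + 1 : ℕ) : ℤ) = i + 1 by push_cast; ring] at this

/-- Let `k` be an infinite field, `B` a standard graded artinian
`k`-algebra and `A = B ⊗ₖ k[x]/(x^d)` for some `d ≥ 1`.  Then `A` has the weak Lefschetz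
property if and only if there is a linear form `ℓ ∈ B₁` such that `·ℓ^d : B_i → B_{i+d}`
has full rank for every `i ≥ 0`. -/
theorem statement_12 {k B A : Type} [Field k] [Infinite k]
    [CommRing B] [Algebra k B] [CommRing A] [Algebra k A]
    (𝒜 : ℤ → Submodule k B) (ℬ : ℤ → Submodule k A)
    (hB : IsStdGradedArtinian k B 𝒜) (hA : IsStdGradedArtinian k A ℬ)
    (d : ℕ) (hd : 1 ≤ d) (φ : B →ₐ[k] A) (x : A)
    (hext : IsCIExtension 𝒜 ℬ φ x d) :
    HasWLP ℬ ↔ ∃ ℓ ∈ 𝒜 1, ∀ i : ℤ, 0 ≤ i → MulFullRank (𝒜 i) (𝒜 (i + d)) (ℓ ^ d) :=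
  statement_12_general 𝒜 ℬ hB d hd φ x hext
end
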